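/- arXiv:2604.02297 — 3 statements merged into one kernel-verified Lean document; each statement's English description precedes it below -/
import Mathlib

section
/- Let d ≥ 1 be an integer, β > 0 and μ ∈ ℝ, and let f_{β,μ}(x,ξ) = (1 + exp(β(|x|² + |ξ|² − μ)))^{-1} on ℝ^d × ℝ^d. Define the position density n_{β,μ}(x) = ∫_{ℝ^d} f_{β,μ}(x,ξ) dξ. Then there exist constants 0 < c_d ≤ C_d depending only on d such that for all x ∈ ℝ^d, all β > 0 and all μ ∈ ℝ: if |x|² ≤ μ then c_d((μ − |x|²)^{d/2} + β^{−d/2}) ≤ n_{β,μ}(x) ≤ C_d((μ − |x|²)^{d/2} + β^{−d/2}), and if |x|² > μ then c_d β^{−d/2} e^{−β(|x|² − μ)} ≤ n_{β,μ}(x) ≤ C_d β^{−d/2} e^{−β(|x|² − μ)}. -/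
set_option maxHeartbeats 1000000

open MeasureTheory Real

noncomputable section

lemma fd_le_exp (t : ℝ) : (1 + exp t)⁻¹ ≤ exp (-t) := by
  rw [exp_neg]
  exact inv_anti₀ (exp_pos t) (by linarith [exp_pos t])

lemma exp_le_two_fd {t : ℝ} (ht : 0 ≤ t) : exp (-t) ≤ 2 * (1 + exp t)⁻¹ := by
  have h1 : (1:ℝ) ≤ exp t := by simpa using exp_le_exp.2 ht
  have h2 : (2 * exp t)⁻¹ ≤ (1 + exp t)⁻¹ :=
    inv_anti₀ (by linarith [exp_pos t]) (by linarith)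
  calc exp (-t) = 2 * (2 * exp t)⁻¹ := by rw [exp_neg]; field_simp
    _ ≤ 2 * (1 + exp t)⁻¹ := by linarith

lemma fd_mono {t : ℝ} (ht : t ≤ 1) : (1 + exp 1)⁻¹ ≤ (1 + exp t)⁻¹ :=
  inv_anti₀ (by linarith [exp_pos t]) (by linarith [exp_le_exp.2 ht])

lemma fd_le_one (t : ℝ) : (1 + exp t)⁻¹ ≤ 1 := by
  rw [inv_le_one_iff₀]; right; linarith [exp_pos t]

lemma integrable_gauss (d : ℕ) {b : ℝ} (hb : 0 < b) :
    Integrable (fun v : EuclideanSpace ℝ (Fin d) => exp (-b * ‖v‖ ^ 2)) := by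
  have h := (GaussianFourier.integrable_cexp_neg_mul_sq_norm_add (V := EuclideanSpace ℝ (Fin d))
    (b := (b : ℂ)) (by simpa using hb) 0 0).norm
  refine h.congr (Filter.Eventually.of_forall fun v => ?_)
  simp [Complex.norm_exp]
  norm_cast
  exact Or.inl rfl

lemma gauss_value (d : ℕ) {b : ℝ} (hb : 0 < b) :
    ∫ v : EuclideanSpace ℝ (Fin d), exp (-b * ‖v‖ ^ 2)
      = Real.pi ^ ((d : ℝ) / 2) * b ^ (-((d : ℝ) / 2)) := by
  rw [GaussianFourier.integral_rexp_neg_mul_sq_norm hb, finrank_euclideanSpace_fin,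
    Real.div_rpow pi_nonneg hb.le, Real.rpow_neg hb.le, div_eq_mul_inv]

lemma sqrt_pow_rpow {t : ℝ} (ht : 0 ≤ t) (d : ℕ) :
    Real.sqrt t ^ d = t ^ ((d : ℝ) / 2) := by
  rw [← Real.rpow_natCast (Real.sqrt t) d, Real.sqrt_eq_rpow, ← Real.rpow_mul ht]
  congr 1
  ring

lemma integrable_fd (d : ℕ) {β : ℝ} (hβ : 0 < β) (a : ℝ) :
    Integrable (fun ξ : EuclideanSpace ℝ (Fin d) => (1 + exp (β * (‖ξ‖ ^ 2 - a)))⁻¹) := by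
  have hcont : Continuous (fun ξ : EuclideanSpace ℝ (Fin d) =>
      (1 + exp (β * (‖ξ‖ ^ 2 - a)))⁻¹) := by
    apply Continuous.inv₀
    · exact continuous_const.add (((continuous_const.mul
        (((continuous_norm).pow 2).sub continuous_const)).rexp))
    · intro ξ; positivity
  refine ((integrable_gauss d hβ).const_mul (exp (β * a))).mono
    hcont.aestronglyMeasurable (Filter.Eventually.of_forall fun ξ => ?_)
  have h1 : (1 + exp (β * (‖ξ‖ ^ 2 - a)))⁻¹ ≤ exp (β * a) * exp (-β * ‖ξ‖ ^ 2) := by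
    calc (1 + exp (β * (‖ξ‖ ^ 2 - a)))⁻¹ ≤ exp (-(β * (‖ξ‖ ^ 2 - a))) := fd_le_exp _
      _ = exp (β * a) * exp (-β * ‖ξ‖ ^ 2) := by rw [← exp_add]; ring_nf
  rw [Real.norm_eq_abs, Real.norm_eq_abs, abs_of_nonneg (by positivity),
    abs_of_nonneg (by positivity)]
  exact h1

/-- The classical Fermi–Dirac phase-space distribution on ℝ^d × ℝ^d. -/
noncomputable def fermiDirac (d : ℕ) (β μ : ℝ)
    (x ξ : EuclideanSpace ℝ (Fin d)) : ℝ :=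
  (1 + Real.exp (β * (‖x‖ ^ 2 + ‖ξ‖ ^ 2 - μ)))⁻¹

theorem stmt_0 (d : ℕ) (hd : 1 ≤ d) :
    ∃ c C : ℝ, 0 < c ∧ c ≤ C ∧
      ∀ (β μ : ℝ), 0 < β → ∀ x : EuclideanSpace ℝ (Fin d),
        (‖x‖ ^ 2 ≤ μ →
          c * ((μ - ‖x‖ ^ 2) ^ ((d : ℝ) / 2) + β ^ (-((d : ℝ) / 2))) ≤
              (∫ ξ : EuclideanSpace ℝ (Fin d), fermiDirac d β μ x ξ) ∧
            (∫ ξ : EuclideanSpace ℝ (Fin d), fermiDirac d β μ x ξ) ≤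
              C * ((μ - ‖x‖ ^ 2) ^ ((d : ℝ) / 2) + β ^ (-((d : ℝ) / 2)))) ∧
        (μ < ‖x‖ ^ 2 →
          c * (β ^ (-((d : ℝ) / 2)) * Real.exp (-(β * (‖x‖ ^ 2 - μ)))) ≤
              (∫ ξ : EuclideanSpace ℝ (Fin d), fermiDirac d β μ x ξ) ∧
            (∫ ξ : EuclideanSpace ℝ (Fin d), fermiDirac d β μ x ξ) ≤
              C * (β ^ (-((d : ℝ) / 2)) * Real.exp (-(β * (‖x‖ ^ 2 - μ))))) := by
  classical
  haveI : Nontrivial (EuclideanSpace ℝ (Fin d)) := by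
    have h : 0 < Module.finrank ℝ (EuclideanSpace ℝ (Fin d)) := by
      rw [finrank_euclideanSpace_fin]; exact hd
    exact Module.nontrivial_of_finrank_pos h
  set p : ℝ := (d : ℝ) / 2 with hp_def
  have hp0 : 0 ≤ p := by positivity
  set V : ℝ := (volume (Metric.ball (0 : EuclideanSpace ℝ (Fin d)) 1)).toReal with hV_def
  have hV : 0 < V :=
    ENNReal.toReal_pos (Metric.measure_ball_pos volume _ one_pos).ne' measure_ball_lt_top.ne
  have hball : ∀ r : ℝ, 0 ≤ r →
      (volume (Metric.ball (0 : EuclideanSpace ℝ (Fin d)) r)).toReal = r ^ d * V := by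
    intro r hr
    rw [hV_def, Measure.addHaar_ball _ _ hr, ENNReal.toReal_mul,
      ENNReal.toReal_ofReal (by positivity), finrank_euclideanSpace_fin]
  have hpi : 0 < Real.pi ^ p := Real.rpow_pos_of_pos Real.pi_pos p
  have h2p : 0 < (2 : ℝ) ^ p := Real.rpow_pos_of_pos two_pos p
  have hce : 0 < (1 + exp 1)⁻¹ := by positivity
  refine ⟨min ((1 + exp 1)⁻¹ * V / 2) (Real.pi ^ p / 2),
    2 ^ p * V + 2 ^ p * Real.pi ^ p + Real.pi ^ p, lt_min (by positivity) (by positivity), ?_, ?_⟩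
  · calc min ((1 + exp 1)⁻¹ * V / 2) (Real.pi ^ p / 2) ≤ Real.pi ^ p / 2 := min_le_right _ _
      _ ≤ 2 ^ p * V + 2 ^ p * Real.pi ^ p + Real.pi ^ p := by nlinarith
  intro β μ hβ x
  set c := min ((1 + exp 1)⁻¹ * V / 2) (Real.pi ^ p / 2) with hc_def
  set C := 2 ^ p * V + 2 ^ p * Real.pi ^ p + Real.pi ^ p with hC_def
  set a := μ - ‖x‖ ^ 2 with ha_def
  set g := fun ξ : EuclideanSpace ℝ (Fin d) => (1 + exp (β * (‖ξ‖ ^ 2 - a)))⁻¹ with hg_def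
  have hfd : (∫ ξ, fermiDirac d β μ x ξ) = ∫ ξ, g ξ := by
    refine integral_congr_ae (Filter.Eventually.of_forall fun ξ => ?_)
    unfold fermiDirac
    simp only [hg_def]
    have h : β * (‖x‖ ^ 2 + ‖ξ‖ ^ 2 - μ) = β * (‖ξ‖ ^ 2 - a) := by rw [ha_def]; ring
    rw [h]
  have hInt : Integrable g := integrable_fd d hβ a
  have hg_nonneg : ∀ ξ, 0 ≤ g ξ := by intro ξ; simp only [hg_def]; positivity
  -- Gaussian upper bound (always valid)
  have hup : (∫ ξ, g ξ) ≤ exp (β * a) * (Real.pi ^ p * β ^ (-p)) := by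
    have h1 : ∀ ξ : EuclideanSpace ℝ (Fin d),
        g ξ ≤ exp (β * a) * exp (-β * ‖ξ‖ ^ 2) := by
      intro ξ
      calc g ξ ≤ exp (-(β * (‖ξ‖ ^ 2 - a))) := fd_le_exp _
        _ = exp (β * a) * exp (-β * ‖ξ‖ ^ 2) := by rw [← exp_add]; ring_nf
    calc (∫ ξ, g ξ) ≤ ∫ ξ : EuclideanSpace ℝ (Fin d), exp (β * a) * exp (-β * ‖ξ‖ ^ 2) :=
        integral_mono hInt ((integrable_gauss d hβ).const_mul _) h1
      _ = exp (β * a) * (Real.pi ^ p * β ^ (-p)) := by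
        rw [integral_const_mul, gauss_value d hβ]
  -- Gaussian lower bound (needs a ≤ 0)
  have hlow_gauss : a ≤ 0 → exp (β * a) * (Real.pi ^ p * β ^ (-p)) / 2 ≤ ∫ ξ, g ξ := by
    intro ha
    have h1 : ∀ ξ : EuclideanSpace ℝ (Fin d),
        exp (β * a) / 2 * exp (-β * ‖ξ‖ ^ 2) ≤ g ξ := by
      intro ξ
      have ht : 0 ≤ β * (‖ξ‖ ^ 2 - a) := by nlinarith [sq_nonneg ‖ξ‖, hβ.le]
      have h2 := exp_le_two_fd ht
      have heq : exp (-(β * (‖ξ‖ ^ 2 - a))) = exp (β * a) * exp (-β * ‖ξ‖ ^ 2) := by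
        rw [← exp_add]; ring_nf
      simp only [hg_def]
      nlinarith [h2, heq]
    calc exp (β * a) * (Real.pi ^ p * β ^ (-p)) / 2
        = ∫ ξ : EuclideanSpace ℝ (Fin d), exp (β * a) / 2 * exp (-β * ‖ξ‖ ^ 2) := by
          rw [integral_const_mul, gauss_value d hβ]; ring
      _ ≤ ∫ ξ, g ξ := integral_mono ((integrable_gauss d hβ).const_mul _) hInt h1
  constructor
  · -- case ‖x‖² ≤ μ
    intro hxμ
    have ha : 0 ≤ a := by rw [ha_def]; linarith
    rw [hfd]
    constructor
    · -- lower bound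
      set r := Real.sqrt (a + β⁻¹) with hr_def
      have hab : 0 ≤ a + β⁻¹ := by have := inv_nonneg.2 hβ.le; linarith
      have hr2 : r ^ 2 = a + β⁻¹ := Real.sq_sqrt hab
      have hrball : ∀ ξ ∈ Metric.ball (0 : EuclideanSpace ℝ (Fin d)) r,
          (1 + exp 1)⁻¹ ≤ g ξ := by
        intro ξ hξ
        have hnorm : ‖ξ‖ < r := by
          simpa [Metric.mem_ball, dist_zero_right] using hξ
        have h2 : ‖ξ‖ ^ 2 < a + β⁻¹ := by nlinarith [norm_nonneg ξ]
        have hββ : β * β⁻¹ = 1 := mul_inv_cancel₀ hβ.ne'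
        have ht : β * (‖ξ‖ ^ 2 - a) ≤ 1 := by nlinarith
        exact fd_mono ht
      have h3 := setIntegral_ge_of_const_le measurableSet_ball measure_ball_lt_top.ne
        hrball hInt.integrableOn
      have h4 := setIntegral_le_integral (s := Metric.ball (0 : EuclideanSpace ℝ (Fin d)) r)
        hInt (Filter.Eventually.of_forall hg_nonneg)
      have hvol : (volume (Metric.ball (0 : EuclideanSpace ℝ (Fin d)) r)).toReal
          = (a + β⁻¹) ^ p * V := by
        rw [hball r (Real.sqrt_nonneg _), hr_def, sqrt_pow_rpow hab d]
      rw [measureReal_def, hvol, smul_eq_mul] at h3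
      have h5 : a ^ p ≤ (a + β⁻¹) ^ p :=
        Real.rpow_le_rpow ha (by have := inv_nonneg.2 hβ.le; linarith) hp0
      have h6 : β ^ (-p) ≤ (a + β⁻¹) ^ p := by
        rw [Real.rpow_neg hβ.le, ← Real.inv_rpow hβ.le]
        exact Real.rpow_le_rpow (inv_nonneg.2 hβ.le) (by linarith) hp0
      have h7 : a ^ p + β ^ (-p) ≤ 2 * (a + β⁻¹) ^ p := by linarith
      have h8 := mul_le_mul_of_nonneg_left h7
        (show (0:ℝ) ≤ (1 + exp 1)⁻¹ * V / 2 by positivity)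
      have h9 : c ≤ (1 + exp 1)⁻¹ * V / 2 := min_le_left _ _
      have h10 : 0 ≤ a ^ p + β ^ (-p) :=
        add_nonneg (Real.rpow_nonneg ha p) (Real.rpow_nonneg hβ.le _)
      nlinarith [mul_le_mul_of_nonneg_right h9 h10]
    · -- upper bound
      set S := Metric.ball (0 : EuclideanSpace ℝ (Fin d)) (Real.sqrt (2 * a)) with hS_def
      have hSm : MeasurableSet S := measurableSet_ball
      have hIndInt : Integrable (S.indicator (fun _ => (1 : ℝ))) :=
        (integrableOn_const measure_ball_lt_top.ne).integrable_indicator hSm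
      have hGaussInt := integrable_gauss d (half_pos hβ)
      have hpt : ∀ ξ : EuclideanSpace ℝ (Fin d),
          g ξ ≤ S.indicator (fun _ => (1 : ℝ)) ξ + exp (-(β / 2) * ‖ξ‖ ^ 2) := by
        intro ξ
        by_cases hξ : ξ ∈ S
        · rw [Set.indicator_of_mem hξ]
          have h1 := fd_le_one (β * (‖ξ‖ ^ 2 - a))
          have h2 := (exp_pos (-(β / 2) * ‖ξ‖ ^ 2)).le
          simp only [hg_def]; linarith
        · rw [Set.indicator_of_notMem hξ]
          have hnorm : Real.sqrt (2 * a) ≤ ‖ξ‖ := by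
            by_contra h
            push_neg at h
            exact hξ (by simpa [hS_def, Metric.mem_ball, dist_zero_right] using h)
          have h2a : 2 * a ≤ ‖ξ‖ ^ 2 := by
            nlinarith [Real.sq_sqrt (by linarith : (0:ℝ) ≤ 2 * a), Real.sqrt_nonneg (2 * a),
              norm_nonneg ξ]
          have ht : β / 2 * ‖ξ‖ ^ 2 ≤ β * (‖ξ‖ ^ 2 - a) := by nlinarith
          calc g ξ ≤ exp (-(β * (‖ξ‖ ^ 2 - a))) := fd_le_exp _
            _ ≤ exp (-(β / 2) * ‖ξ‖ ^ 2) := by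
              apply exp_le_exp.2; linarith
            _ = 0 + exp (-(β / 2) * ‖ξ‖ ^ 2) := by ring
      have hvolS : (volume S).toReal = 2 ^ p * a ^ p * V := by
        rw [hS_def, hball _ (Real.sqrt_nonneg _), sqrt_pow_rpow (by linarith) d,
          Real.mul_rpow (by norm_num) ha]
      have hhalf : (β / 2) ^ (-p) = 2 ^ p * β ^ (-p) := by
        rw [div_eq_mul_inv, Real.mul_rpow hβ.le (by norm_num),
          Real.inv_rpow (by norm_num : (0:ℝ) ≤ 2), Real.rpow_neg (by norm_num : (0:ℝ) ≤ 2)]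
        rw [inv_inv]; ring
      have hmain : (∫ ξ, g ξ) ≤ 2 ^ p * a ^ p * V + Real.pi ^ p * (2 ^ p * β ^ (-p)) := by
        calc (∫ ξ, g ξ)
            ≤ ∫ ξ : EuclideanSpace ℝ (Fin d),
              (S.indicator (fun _ => (1 : ℝ)) ξ + exp (-(β / 2) * ‖ξ‖ ^ 2)) :=
            integral_mono hInt (hIndInt.add hGaussInt) hpt
          _ = (volume S).toReal + Real.pi ^ p * (β / 2) ^ (-p) := by
            rw [integral_add hIndInt hGaussInt, gauss_value d (half_pos hβ),
              integral_indicator_const _ hSm, smul_eq_mul, mul_one]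
            rfl
          _ = 2 ^ p * a ^ p * V + Real.pi ^ p * (2 ^ p * β ^ (-p)) := by
            rw [hvolS, hhalf]
      have hap : 0 ≤ a ^ p := Real.rpow_nonneg ha p
      have hbp : 0 ≤ β ^ (-p) := Real.rpow_nonneg hβ.le _
      nlinarith [mul_nonneg hap hpi.le, mul_nonneg hbp hpi.le, mul_nonneg hap h2p.le,
        mul_nonneg hbp (mul_nonneg h2p.le hV.le), mul_nonneg hap (mul_nonneg h2p.le hpi.le),
        mul_nonneg hbp (mul_nonneg h2p.le hpi.le)]
  · -- case μ < ‖x‖²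
    intro hxμ
    have ha : a ≤ 0 := by rw [ha_def]; linarith
    have hexp_eq : Real.exp (-(β * (‖x‖ ^ 2 - μ))) = exp (β * a) := by
      congr 1; rw [ha_def]; ring
    rw [hfd, hexp_eq]
    have hfac : (0:ℝ) ≤ β ^ (-p) * exp (β * a) := by positivity
    have hlow := hlow_gauss ha
    constructor
    · have h9 : c ≤ Real.pi ^ p / 2 := min_le_right _ _
      nlinarith [mul_le_mul_of_nonneg_right h9 hfac]
    · have hCpi : Real.pi ^ p ≤ C := by rw [hC_def]; nlinarith
      nlinarith [mul_le_mul_of_nonneg_right hCpi hfac]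
end
end

section
/- Let d ≥ 1 be an integer, β > 0 and μ ∈ ℝ, and let f_{β,μ}(x,ξ) = (1 + exp(β(|x|² + |ξ|² − μ)))^{-1} on ℝ^d × ℝ^d. Then there exist constants 0 < c_d ≤ C_d depending only on d such that for all β > 0 and μ ∈ ℝ: if μ ≥ 0 then c_d(μ^d + β^{−d}) ≤ ∫_{ℝ^d × ℝ^d} f_{β,μ}(x,ξ) dx dξ ≤ C_d(μ^d + β^{−d}), and if μ < 0 then c_d β^{−d} e^{βμ} ≤ ∫_{ℝ^d × ℝ^d} f_{β,μ}(x,ξ) dx dξ ≤ C_d β^{−d} e^{βμ}. In particular the total mass is finite, and it is bounded uniformly in β for β ≥ 1. -/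
open MeasureTheory

open Real Metric Set

lemma fd_gauss_int_c {d : ℕ} {b : ℝ} (hb : 0 < b) :
    Integrable (fun v : EuclideanSpace ℝ (Fin d) => Real.exp (-b * ‖v‖ ^ 2)) := by
  have h : Integrable (fun v : EuclideanSpace ℝ (Fin d) =>
      Complex.exp (-(b:ℂ) * (‖v‖:ℂ) ^ 2)) := by
    simpa using GaussianFourier.integrable_cexp_neg_mul_sq_norm_add
      (V := EuclideanSpace ℝ (Fin d)) (b := (b:ℂ)) (by simpa using hb) 0 0
  refine h.re.congr (Filter.Eventually.of_forall fun v => ?_)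
  show (Complex.exp (-(b:ℂ) * (‖v‖:ℂ) ^ 2)).re = _
  rw [show -(b:ℂ) * (‖v‖:ℂ) ^ 2 = ((-b * ‖v‖ ^ 2 : ℝ) : ℂ) by push_cast; ring,
    ← Complex.ofReal_exp, Complex.ofReal_re]

lemma fd_gauss_int_eq {d : ℕ} {b : ℝ} (hb : 0 < b) :
    ∫ v : EuclideanSpace ℝ (Fin d), Real.exp (-b * ‖v‖ ^ 2) = (π / b) ^ ((d:ℝ) / 2) := by
  rw [GaussianFourier.integral_rexp_neg_mul_sq_norm hb]
  simp [finrank_euclideanSpace_fin]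

lemma fd_gauss2_integrable {d : ℕ} {b : ℝ} (hb : 0 < b) :
    Integrable (fun z : EuclideanSpace ℝ (Fin d) × EuclideanSpace ℝ (Fin d) =>
      Real.exp (-b * (‖z.1‖ ^ 2 + ‖z.2‖ ^ 2))) := by
  have h := (fd_gauss_int_c (d := d) hb).mul_prod (fd_gauss_int_c (d := d) hb)
  rw [← Measure.volume_eq_prod] at h
  refine h.congr (Filter.Eventually.of_forall fun z => ?_)
  show Real.exp _ * Real.exp _ = Real.exp _
  rw [← Real.exp_add]; ring_nf

lemma fd_gauss2_integral {d : ℕ} {b : ℝ} (hb : 0 < b) :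
    ∫ z : EuclideanSpace ℝ (Fin d) × EuclideanSpace ℝ (Fin d),
      Real.exp (-b * (‖z.1‖ ^ 2 + ‖z.2‖ ^ 2)) = (π / b) ^ (d:ℝ) := by
  have key : ∀ z : EuclideanSpace ℝ (Fin d) × EuclideanSpace ℝ (Fin d),
      Real.exp (-b * (‖z.1‖ ^ 2 + ‖z.2‖ ^ 2))
        = Real.exp (-b * ‖z.1‖ ^ 2) * Real.exp (-b * ‖z.2‖ ^ 2) := fun z => by
    rw [← Real.exp_add]; ring_nf
  simp_rw [key]
  rw [Measure.volume_eq_prod,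
    integral_prod_mul (fun x : EuclideanSpace ℝ (Fin d) => Real.exp (-b * ‖x‖ ^ 2))
      (fun x : EuclideanSpace ℝ (Fin d) => Real.exp (-b * ‖x‖ ^ 2)),
    fd_gauss_int_eq hb, ← Real.rpow_add (by positivity)]
  norm_num

/-- volume of the unit ball in `EuclideanSpace ℝ (Fin d)` -/
noncomputable def fdvb (d : ℕ) : ℝ :=
  (volume (Metric.ball (0 : EuclideanSpace ℝ (Fin d)) 1)).toReal

lemma fdvb_pos (d : ℕ) : 0 < fdvb d :=
  ENNReal.toReal_pos (measure_ball_pos _ _ one_pos).ne' measure_ball_lt_top.ne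

lemma fd_vol_closedBall_toReal (d : ℕ) {r : ℝ} (hr : 0 ≤ r) :
    (volume (Metric.closedBall (0 : EuclideanSpace ℝ (Fin d)) r)).toReal = r ^ d * fdvb d := by
  rw [Measure.addHaar_closedBall volume (0 : EuclideanSpace ℝ (Fin d)) hr,
    ENNReal.toReal_mul, ENNReal.toReal_ofReal (by positivity), finrank_euclideanSpace_fin]
  rfl

lemma fd_vol_prodBall (d : ℕ) {r : ℝ} (hr : 0 ≤ r) :
    (volume ((Metric.closedBall (0 : EuclideanSpace ℝ (Fin d)) r) ×ˢ
      (Metric.closedBall (0 : EuclideanSpace ℝ (Fin d)) r))).toReal = (r ^ d * fdvb d) ^ 2 := by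
  rw [Measure.volume_eq_prod, Measure.prod_prod, ENNReal.toReal_mul,
    fd_vol_closedBall_toReal d hr, sq]

lemma fd_vol_prodBall_ne_top (d : ℕ) (r : ℝ) :
    volume ((Metric.closedBall (0 : EuclideanSpace ℝ (Fin d)) r) ×ˢ
      (Metric.closedBall (0 : EuclideanSpace ℝ (Fin d)) r)) ≠ ⊤ := by
  rw [Measure.volume_eq_prod, Measure.prod_prod]
  exact (ENNReal.mul_lt_top measure_closedBall_lt_top measure_closedBall_lt_top).ne

/-- the small constant -/
noncomputable def fdcc (d : ℕ) : ℝ := min (fdvb d ^ 2 * (1/2) ^ d * (1/2)) (1/2) / 2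
/-- the large constant -/
noncomputable def fdCC (d : ℕ) : ℝ := max (fdvb d ^ 2 * 2 ^ d) ((2 * π) ^ (d:ℝ))

lemma fdcc_pos (d : ℕ) : 0 < fdcc d := by
  have := fdvb_pos d
  unfold fdcc
  positivity

lemma fdcc_le_CC (d : ℕ) : fdcc d ≤ fdCC d := by
  have h1 : fdcc d ≤ 1/4 := by
    unfold fdcc
    have : min (fdvb d ^ 2 * (1/2) ^ d * (1/2)) (1/2) ≤ 1/2 := min_le_right _ _
    linarith
  have h2 : (1:ℝ) ≤ (2 * π) ^ (d:ℝ) := by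
    rw [show (1:ℝ) = 1 ^ (d:ℝ) by simp]
    exact Real.rpow_le_rpow (by norm_num) (by nlinarith [Real.pi_gt_three]) (by positivity)
  calc fdcc d ≤ 1/4 := h1
    _ ≤ (2 * π) ^ (d:ℝ) := by linarith
    _ ≤ fdCC d := le_max_right _ _

lemma fd_aux_arith (β μ S : ℝ) (hβ : 0 < β) (hS : 2*μ < S) :
    -(β * (S - μ)) ≤ -(β/2) * S := by nlinarith

set_option maxHeartbeats 1000000 in
lemma fd_key (d : ℕ) (β μ : ℝ) (hβ : 0 < β) :
    Integrable (fun z : EuclideanSpace ℝ (Fin d) × EuclideanSpace ℝ (Fin d) =>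
      fermiDirac d β μ z.1 z.2) ∧
    (0 ≤ μ →
      fdcc d * (μ ^ d + β ^ (-(d : ℝ))) ≤
          (∫ z : EuclideanSpace ℝ (Fin d) × EuclideanSpace ℝ (Fin d),
            fermiDirac d β μ z.1 z.2) ∧
        (∫ z : EuclideanSpace ℝ (Fin d) × EuclideanSpace ℝ (Fin d),
            fermiDirac d β μ z.1 z.2) ≤
          fdCC d * (μ ^ d + β ^ (-(d : ℝ)))) ∧
    (μ < 0 →
      fdcc d * (β ^ (-(d : ℝ)) * Real.exp (β * μ)) ≤
          (∫ z : EuclideanSpace ℝ (Fin d) × EuclideanSpace ℝ (Fin d),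
            fermiDirac d β μ z.1 z.2) ∧
        (∫ z : EuclideanSpace ℝ (Fin d) × EuclideanSpace ℝ (Fin d),
            fermiDirac d β μ z.1 z.2) ≤
          fdCC d * (β ^ (-(d : ℝ)) * Real.exp (β * μ))) := by
  set f : EuclideanSpace ℝ (Fin d) × EuclideanSpace ℝ (Fin d) → ℝ := fun z => fermiDirac d β μ z.1 z.2 with hf
  set s : EuclideanSpace ℝ (Fin d) × EuclideanSpace ℝ (Fin d) → ℝ := fun z => ‖z.1‖ ^ 2 + ‖z.2‖ ^ 2 with hs
  have hs0 : ∀ z, 0 ≤ s z := fun z => by simp only [hs]; positivity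
  have hfd : ∀ z, f z = (1 + Real.exp (β * (s z - μ)))⁻¹ := fun z => rfl
  have hfpos : ∀ z, 0 < f z := fun z => by
    rw [hfd]; positivity
  have hGint : ∀ b : ℝ, 0 < b →
      (∫ z : EuclideanSpace ℝ (Fin d) × EuclideanSpace ℝ (Fin d), Real.exp (-b * s z)) = (π / b) ^ (d:ℝ) := by
    intro b hb
    simp only [hs]
    exact fd_gauss2_integral hb
  have hGint' : ∀ b : ℝ, 0 < b →
      Integrable (fun z : EuclideanSpace ℝ (Fin d) × EuclideanSpace ℝ (Fin d) => Real.exp (-b * s z)) := by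
    intro b hb
    simp only [hs]
    exact fd_gauss2_integrable hb
  have hf_le : ∀ z, f z ≤ Real.exp (β * μ) * Real.exp (-β * s z) := by
    intro z
    rw [hfd]
    calc (1 + Real.exp (β * (s z - μ)))⁻¹ ≤ (Real.exp (β * (s z - μ)))⁻¹ :=
          inv_anti₀ (Real.exp_pos _) (by linarith)
      _ = Real.exp (-(β * (s z - μ))) := (Real.exp_neg _).symm
      _ = Real.exp (β * μ) * Real.exp (-β * s z) := by
          rw [← Real.exp_add]; congr 1; ring
  have hcont : Continuous f := by
    simp only [hf]
    unfold fermiDirac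
    exact Continuous.inv₀ (by fun_prop) (fun z => by positivity)
  have hint : Integrable f := by
    refine ((hGint' β hβ).const_mul (Real.exp (β * μ))).mono'
      hcont.aestronglyMeasurable (Filter.Eventually.of_forall fun z => ?_)
    rw [Real.norm_eq_abs, abs_of_pos (hfpos z)]
    exact hf_le z
  have hsplit : ∀ x : ℝ, 0 ≤ x → (x / β) ^ (d:ℝ) = x ^ (d:ℝ) * β ^ (-(d:ℝ)) := by
    intro x hx
    rw [Real.div_rpow hx hβ.le, Real.rpow_neg hβ.le, div_eq_mul_inv]
  have hβd0 : 0 ≤ β ^ (-(d:ℝ)) := Real.rpow_nonneg hβ.le _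
  have hπ1 : (1:ℝ) ≤ π ^ (d:ℝ) := by
    rw [show (1:ℝ) = 1 ^ (d:ℝ) by simp]
    exact Real.rpow_le_rpow (by norm_num) (by linarith [Real.pi_gt_three]) (by positivity)
  have h2π : π ^ (d:ℝ) ≤ (2 * π) ^ (d:ℝ) :=
    Real.rpow_le_rpow Real.pi_pos.le (by linarith [Real.pi_pos]) (by positivity)
  -- Gaussian lower bound, valid for all μ
  have hlow : 1/2 * Real.exp (β * min μ 0) * (π / β) ^ (d:ℝ) ≤ ∫ z, f z := by
    have hm0 : min μ 0 ≤ 0 := min_le_right _ _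
    have hmμ : min μ 0 ≤ μ := min_le_left _ _
    have hpt : ∀ z, (1/2 * Real.exp (β * min μ 0)) * Real.exp (-β * s z) ≤ f z := by
      intro z
      have hB0 : 0 ≤ β * (s z - min μ 0) := mul_nonneg hβ.le (by linarith [hs0 z])
      have hAB : β * (s z - μ) ≤ β * (s z - min μ 0) :=
        mul_le_mul_of_nonneg_left (by linarith) hβ.le
      have h2 : 1 + Real.exp (β * (s z - μ)) ≤ 2 * Real.exp (β * (s z - min μ 0)) := by
        have e1 := Real.one_le_exp hB0
        have e2 := Real.exp_le_exp.2 hAB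
        linarith
      calc (1/2 * Real.exp (β * min μ 0)) * Real.exp (-β * s z)
          = 1/2 * Real.exp (β * min μ 0 + -β * s z) := by rw [mul_assoc, ← Real.exp_add]
        _ = (2 * Real.exp (β * (s z - min μ 0)))⁻¹ := by
            rw [show β * min μ 0 + -β * s z = -(β * (s z - min μ 0)) by ring,
              mul_inv, ← Real.exp_neg]
            norm_num
        _ ≤ (1 + Real.exp (β * (s z - μ)))⁻¹ := inv_anti₀ (by positivity) h2
        _ = f z := (hfd z).symm
    calc 1/2 * Real.exp (β * min μ 0) * (π / β) ^ (d:ℝ)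
        = ∫ z, (1/2 * Real.exp (β * min μ 0)) * Real.exp (-β * s z) := by
          rw [integral_const_mul, hGint β hβ]
      _ ≤ ∫ z, f z := integral_mono ((hGint' β hβ).const_mul _) hint hpt
  -- Gaussian upper bound, valid for all μ
  have hup_exp : (∫ z, f z) ≤ Real.exp (β * μ) * (π / β) ^ (d:ℝ) := by
    calc (∫ z, f z) ≤ ∫ z, Real.exp (β * μ) * Real.exp (-β * s z) :=
          integral_mono hint ((hGint' β hβ).const_mul _) hf_le
      _ = Real.exp (β * μ) * (π / β) ^ (d:ℝ) := by
          rw [integral_const_mul, hGint β hβ]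
  refine ⟨hint, fun hμ => ?_, fun hμ => ?_⟩
  · -- case 0 ≤ μ
    have hμd : (0:ℝ) ≤ μ ^ d := pow_nonneg hμ _
    constructor
    · -- lower bound
      set r : ℝ := Real.sqrt (μ / 2) with hrdef
      have hr0 : 0 ≤ r := Real.sqrt_nonneg _
      have hr2 : r ^ 2 = μ / 2 := Real.sq_sqrt (by linarith)
      set B : Set (EuclideanSpace ℝ (Fin d) × EuclideanSpace ℝ (Fin d)) := (Metric.closedBall (0 : EuclideanSpace ℝ (Fin d)) r) ×ˢ (Metric.closedBall (0 : EuclideanSpace ℝ (Fin d)) r)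
        with hBdef
      have hBmeas : MeasurableSet B := measurableSet_closedBall.prod measurableSet_closedBall
      have hBint : Integrable (B.indicator fun _ => (1/2 : ℝ)) := by
        rw [integrable_indicator_iff hBmeas]
        exact integrableOn_const (fd_vol_prodBall_ne_top d r)
      have hptB : ∀ z, B.indicator (fun _ => (1/2 : ℝ)) z ≤ f z := by
        intro z
        by_cases hz : z ∈ B
        · rw [Set.indicator_of_mem hz]
          obtain ⟨hz1, hz2⟩ := hz
          rw [Metric.mem_closedBall, dist_zero_right] at hz1 hz2
          have h1 : ‖z.1‖ ^ 2 ≤ r ^ 2 := by nlinarith [norm_nonneg z.1]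
          have h2 : ‖z.2‖ ^ 2 ≤ r ^ 2 := by nlinarith [norm_nonneg z.2]
          have hsz : s z ≤ μ := by simp only [hs]; nlinarith
          have hA0 : β * (s z - μ) ≤ 0 := mul_nonpos_of_nonneg_of_nonpos hβ.le (by linarith)
          have he1 : Real.exp (β * (s z - μ)) ≤ 1 := Real.exp_le_one_iff.2 hA0
          rw [hfd, show (1/2 : ℝ) = 2⁻¹ by norm_num]
          exact inv_anti₀ (by positivity) (by linarith)
        · rw [Set.indicator_of_notMem hz]
          exact (hfpos z).le
      have hIB : (fdvb d ^ 2 * (1/2) ^ d * (1/2)) * μ ^ d ≤ ∫ z, f z := by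
        have hmono := integral_mono hBint hint hptB
        rw [integral_indicator_const _ hBmeas, smul_eq_mul, measureReal_def, fd_vol_prodBall d hr0] at hmono
        have hrd : (r ^ d) ^ 2 = (μ/2) ^ d := by
          rw [← pow_mul, mul_comm d 2, pow_mul, hr2]
        have he1 : (r ^ d * fdvb d) ^ 2 * (1/2)
            = (fdvb d ^ 2 * (1/2) ^ d * (1/2)) * μ ^ d := by
          rw [mul_pow, hrd, show μ/2 = μ * (1/2) by ring, mul_pow]
          ring
        linarith [hmono, he1.symm.trans_le hmono]
      have hmin : min μ 0 = 0 := min_eq_right hμ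
      have hIG : 1/2 * β ^ (-(d:ℝ)) ≤ ∫ z, f z := by
        rw [hmin, mul_zero, Real.exp_zero, mul_one, hsplit π Real.pi_pos.le] at hlow
        nlinarith [hβd0]
      have hc1 : fdcc d ≤ (fdvb d ^ 2 * (1/2) ^ d * (1/2)) / 2 := by
        unfold fdcc
        have := min_le_left (fdvb d ^ 2 * (1/2) ^ d * (1/2)) (1/2 : ℝ)
        linarith
      have hc2 : fdcc d ≤ 1/4 := by
        unfold fdcc
        have := min_le_right (fdvb d ^ 2 * (1/2) ^ d * (1/2)) (1/2 : ℝ)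
        linarith
      nlinarith [mul_le_mul_of_nonneg_right hc1 hμd, mul_le_mul_of_nonneg_right hc2 hβd0]
    · -- upper bound
      set R : ℝ := Real.sqrt (2 * μ) with hRdef
      have hR0 : 0 ≤ R := Real.sqrt_nonneg _
      have hR2 : R ^ 2 = 2 * μ := Real.sq_sqrt (by linarith)
      set A : Set (EuclideanSpace ℝ (Fin d) × EuclideanSpace ℝ (Fin d)) := (Metric.closedBall (0 : EuclideanSpace ℝ (Fin d)) R) ×ˢ (Metric.closedBall (0 : EuclideanSpace ℝ (Fin d)) R)
        with hAdef
      have hAmeas : MeasurableSet A := measurableSet_closedBall.prod measurableSet_closedBall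
      have hAint : Integrable (A.indicator fun _ => (1 : ℝ)) := by
        rw [integrable_indicator_iff hAmeas]
        exact integrableOn_const (fd_vol_prodBall_ne_top d R)
      have hptA : ∀ z, f z ≤ A.indicator (fun _ => (1 : ℝ)) z + Real.exp (-(β/2) * s z) := by
        intro z
        by_cases hz : z ∈ A
        · rw [Set.indicator_of_mem hz]
          have hle1 : f z ≤ 1 := by
            rw [hfd, show (1:ℝ) = 1⁻¹ by norm_num]
            exact inv_anti₀ one_pos (by norm_num; linarith [Real.exp_pos (β * (s z - μ))])
          linarith [Real.exp_pos (-(β/2) * s z)]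
        · rw [Set.indicator_of_notMem hz]
          have hsz : 2 * μ < s z := by
            rw [hAdef, Set.mem_prod, not_and_or] at hz
            have hn1 := norm_nonneg z.1
            have hn2 := norm_nonneg z.2
            rcases hz with hz | hz
            · rw [Metric.mem_closedBall, dist_zero_right, not_le] at hz
              have : R ^ 2 < ‖z.1‖ ^ 2 := by nlinarith
              simp only [hs]; nlinarith
            · rw [Metric.mem_closedBall, dist_zero_right, not_le] at hz
              have : R ^ 2 < ‖z.2‖ ^ 2 := by nlinarith
              simp only [hs]; nlinarith
          have step1 : f z ≤ Real.exp (-(β * (s z - μ))) := by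
            rw [hfd]
            calc (1 + Real.exp (β * (s z - μ)))⁻¹ ≤ (Real.exp (β * (s z - μ)))⁻¹ :=
                inv_anti₀ (Real.exp_pos _) (by linarith)
              _ = Real.exp (-(β * (s z - μ))) := (Real.exp_neg _).symm
          have step2 : Real.exp (-(β * (s z - μ))) ≤ Real.exp (-(β/2) * s z) := by
            exact Real.exp_le_exp.2 (fd_aux_arith β μ (s z) hβ hsz)
          linarith
      have hI : (∫ z, f z) ≤ (2:ℝ) ^ d * μ ^ d * fdvb d ^ 2 + (π / (β/2)) ^ (d:ℝ) := by
        have hgint : Integrable (fun z : EuclideanSpace ℝ (Fin d) × EuclideanSpace ℝ (Fin d) =>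
            A.indicator (fun _ => (1:ℝ)) z + Real.exp (-(β/2) * s z)) :=
          hAint.add (hGint' (β/2) (half_pos hβ))
        have hmono := integral_mono hint hgint hptA
        have hsum : (∫ z : EuclideanSpace ℝ (Fin d) × EuclideanSpace ℝ (Fin d),
            (A.indicator (fun _ => (1:ℝ)) z + Real.exp (-(β/2) * s z)))
            = (volume A).toReal • (1:ℝ) + (π / (β/2)) ^ (d:ℝ) := by
          rw [integral_add hAint (hGint' (β/2) (half_pos hβ)),
            integral_indicator_const _ hAmeas, measureReal_def, hGint (β/2) (half_pos hβ)]
        rw [hsum, smul_eq_mul, mul_one, fd_vol_prodBall d hR0] at hmono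
        have hRd : (R ^ d * fdvb d) ^ 2 = (2:ℝ) ^ d * μ ^ d * fdvb d ^ 2 := by
          rw [mul_pow, ← pow_mul, mul_comm d 2, pow_mul, hR2, mul_pow]
        rw [hRd] at hmono
        linarith
      have hhalf : π / (β/2) = (2 * π) / β := by field_simp
      rw [hhalf, hsplit (2*π) (by positivity)] at hI
      have hC1 : fdvb d ^ 2 * 2 ^ d ≤ fdCC d := le_max_left _ _
      have hC2 : (2 * π) ^ (d:ℝ) ≤ fdCC d := le_max_right _ _
      nlinarith [mul_le_mul_of_nonneg_right hC1 hμd, mul_le_mul_of_nonneg_right hC2 hβd0]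
  · -- case μ < 0
    have hmin : min μ 0 = μ := min_eq_left hμ.le
    have hexp : 0 < Real.exp (β * μ) := Real.exp_pos _
    rw [hmin, hsplit π Real.pi_pos.le] at hlow
    rw [hsplit π Real.pi_pos.le] at hup_exp
    have hc2 : fdcc d ≤ 1/4 := by
      unfold fdcc
      have := min_le_right (fdvb d ^ 2 * (1/2) ^ d * (1/2)) (1/2 : ℝ)
      linarith
    have hC2 : (2 * π) ^ (d:ℝ) ≤ fdCC d := le_max_right _ _
    constructor
    · nlinarith [mul_nonneg hβd0 hexp.le, mul_le_mul_of_nonneg_right hπ1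
        (mul_nonneg hβd0 hexp.le)]
    · nlinarith [mul_nonneg hβd0 hexp.le, mul_le_mul_of_nonneg_right (h2π.trans hC2)
        (mul_nonneg hβd0 hexp.le)]

theorem stmt_1 (d : ℕ) (hd : 1 ≤ d) :
    (∃ c C : ℝ, 0 < c ∧ c ≤ C ∧
      ∀ (β μ : ℝ), 0 < β →
        Integrable (fun z : EuclideanSpace ℝ (Fin d) × EuclideanSpace ℝ (Fin d) =>
          fermiDirac d β μ z.1 z.2) ∧
        (0 ≤ μ →
          c * (μ ^ d + β ^ (-(d : ℝ))) ≤
              (∫ z : EuclideanSpace ℝ (Fin d) × EuclideanSpace ℝ (Fin d),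
                fermiDirac d β μ z.1 z.2) ∧
            (∫ z : EuclideanSpace ℝ (Fin d) × EuclideanSpace ℝ (Fin d),
                fermiDirac d β μ z.1 z.2) ≤
              C * (μ ^ d + β ^ (-(d : ℝ)))) ∧
        (μ < 0 →
          c * (β ^ (-(d : ℝ)) * Real.exp (β * μ)) ≤
              (∫ z : EuclideanSpace ℝ (Fin d) × EuclideanSpace ℝ (Fin d),
                fermiDirac d β μ z.1 z.2) ∧
            (∫ z : EuclideanSpace ℝ (Fin d) × EuclideanSpace ℝ (Fin d),
                fermiDirac d β μ z.1 z.2) ≤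
              C * (β ^ (-(d : ℝ)) * Real.exp (β * μ)))) ∧
    (∀ μ : ℝ, ∃ C' : ℝ, ∀ β : ℝ, 1 ≤ β →
      (∫ z : EuclideanSpace ℝ (Fin d) × EuclideanSpace ℝ (Fin d),
        fermiDirac d β μ z.1 z.2) ≤ C') := by
  constructor
  · exact ⟨fdcc d, fdCC d, fdcc_pos d, fdcc_le_CC d, fun β μ hβ => fd_key d β μ hβ⟩
  · intro μ
    refine ⟨fdCC d * ((max μ 0) ^ d + 1), fun β hβ1 => ?_⟩
    have hβ : 0 < β := lt_of_lt_of_le one_pos hβ1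
    have hCC0 : 0 ≤ fdCC d := le_trans (fdcc_pos d).le (fdcc_le_CC d)
    have hβd1 : β ^ (-(d:ℝ)) ≤ 1 :=
      Real.rpow_le_one_of_one_le_of_nonpos hβ1 (neg_nonpos.2 (Nat.cast_nonneg d))
    rcases le_or_gt 0 μ with h | h
    · have hub := ((fd_key d β μ hβ).2.1 h).2
      have : fdCC d * (μ ^ d + β ^ (-(d:ℝ))) ≤ fdCC d * ((max μ 0) ^ d + 1) := by
        rw [max_eq_left h]
        exact mul_le_mul_of_nonneg_left (by linarith) hCC0
      linarith
    · have hub := ((fd_key d β μ hβ).2.2 h).2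
      have he : Real.exp (β * μ) ≤ 1 :=
        Real.exp_le_one_iff.2 (mul_nonpos_of_nonneg_of_nonpos hβ.le h.le)
      have hβd0 : 0 ≤ β ^ (-(d:ℝ)) := Real.rpow_nonneg hβ.le _
      have h1 : β ^ (-(d:ℝ)) * Real.exp (β * μ) ≤ 1 := by
        nlinarith [Real.exp_pos (β * μ)]
      have h2 : (1:ℝ) ≤ (max μ 0) ^ d + 1 := by
        nlinarith [pow_nonneg (le_max_right μ 0) d]
      calc (∫ z : EuclideanSpace ℝ (Fin d) × EuclideanSpace ℝ (Fin d),
              fermiDirac d β μ z.1 z.2)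
          ≤ fdCC d * (β ^ (-(d:ℝ)) * Real.exp (β * μ)) := hub
        _ ≤ fdCC d * 1 := mul_le_mul_of_nonneg_left h1 hCC0
        _ ≤ fdCC d * ((max μ 0) ^ d + 1) := mul_le_mul_of_nonneg_left h2 hCC0
end

section
/- Let d ≥ 1 be an integer and p ∈ [1,∞) a real number, and let f_{β,μ}(x,ξ) = (1 + exp(β(|x|² + |ξ|² − μ)))^{-1} on ℝ^d × ℝ^d. Then there exist constants 0 < c ≤ C depending only on d and p such that for all β > 0 and all μ ∈ ℝ the following two-sided estimates hold, where ∇_z denotes the full gradient in z = (x,ξ) ∈ ℝ^{2d}: (i) ‖∇_z f_{β,μ}‖_{L^p(ℝ^{2d})} is bounded below by c and above by C times β^{1/2 − d/p}(⟨βμ⟩^{(d−1)/p + 1/2} 𝟙_{μ ≥ 0} + e^{βμ} 𝟙_{μ < 0}); (ii) ‖f_{β,μ}(1 − f_{β,μ})‖_{L^p(ℝ^{2d})} is bounded below by c and above by C times β^{−d/p}(⟨βμ⟩^{(d−1)/p} 𝟙_{μ ≥ 0} + e^{βμ} 𝟙_{μ < 0}). -/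
open MeasureTheory

/-- The classical Fermi–Dirac phase-space distribution, as a function of the
phase-space variable `z = (x, ξ) ∈ ℝ^{2d}`, so that `|x|² + |ξ|² = ‖z‖²`. -/
noncomputable def fFD (d : ℕ) (β μ : ℝ) (z : EuclideanSpace ℝ (Fin (2 * d))) : ℝ :=
  (1 + Real.exp (β * (‖z‖ ^ 2 - μ)))⁻¹

section Aux
open Set Real

lemma int_rpow_exp {k b : ℝ} (hk : 0 ≤ k) (hb : 0 < b) :
    IntegrableOn (fun x : ℝ => x ^ k * Real.exp (-b * x)) (Ioi 0) := by
  have h := integrableOn_rpow_mul_exp_neg_mul_rpow (p := 1) (s := k) (b := b)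
    (by linarith) one_pos hb
  simpa [Real.rpow_one] using h

lemma integrable_abs_rpow_exp {k b : ℝ} (hk : 0 ≤ k) (hb : 0 < b) :
    Integrable (fun t : ℝ => |t| ^ k * Real.exp (-b * |t|)) := by
  have h1 : IntegrableOn (fun t : ℝ => |t| ^ k * Real.exp (-b * |t|)) (Ioi 0) := by
    refine (int_rpow_exp hk hb).congr_fun (fun x hx => ?_) measurableSet_Ioi
    rw [abs_of_pos hx]
  have h2 : IntegrableOn (fun t : ℝ => |t| ^ k * Real.exp (-b * |t|)) (Iic 0) := by
    have m : MeasurableEmbedding fun x : ℝ => -x := (Homeomorph.neg ℝ).measurableEmbedding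
    rw [← Measure.map_neg_eq_self (volume : Measure ℝ)]
    rw [m.integrableOn_map_iff]
    simp_rw [Function.comp_def, abs_neg, neg_preimage, neg_Iic, neg_zero]
    exact Iff.mpr integrableOn_Ici_iff_integrableOn_Ioi h1
  have := h2.union h1
  rw [Iic_union_Ioi] at this; exact integrableOn_univ.mp this

lemma low_seg {f : ℝ → ℝ} (hf : IntegrableOn f (Ioi 0)) (h0 : ∀ σ ∈ Ioi (0:ℝ), 0 ≤ f σ)
    {a m : ℝ} (ha : 0 ≤ a) (hm : ∀ σ ∈ Ioc (a+1) (a+2), m ≤ f σ) :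
    m ≤ ∫ σ in Ioi (0:ℝ), f σ := by
  have hsub : Ioc (a+1) (a+2) ⊆ Ioi (0:ℝ) := fun x hx => lt_of_lt_of_le (by linarith) hx.1.le
  have h1 : ∫ σ in Ioc (a+1) (a+2), f σ ≤ ∫ σ in Ioi (0:ℝ), f σ := by
    refine setIntegral_mono_set hf ?_ (HasSubset.Subset.eventuallyLE hsub)
    exact (ae_restrict_iff' measurableSet_Ioi).mpr (Filter.Eventually.of_forall h0)
  have h2 : m ≤ ∫ σ in Ioc (a+1) (a+2), f σ := by
    have hc : (∫ _σ in Ioc (a+1) (a+2), m) = m := by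
      simp [Real.volume_Ioc, show a + 2 - (a+1) = 1 by ring]
    rw [← hc]
    exact setIntegral_mono_on (integrableOn_const (by simp [Real.volume_Ioc]))
      (hf.mono_set hsub) measurableSet_Ioc hm
  linarith

lemma rpow_add_le {a b k : ℝ} (ha : 0 ≤ a) (hb : 0 ≤ b) (hk : 0 ≤ k) :
    (a + b) ^ k ≤ 2 ^ k * (a ^ k + b ^ k) := by
  rcases le_total a b with h | h
  · calc (a + b) ^ k ≤ (2 * b) ^ k := by
          exact Real.rpow_le_rpow (by linarith) (by linarith) hk
      _ = 2 ^ k * b ^ k := Real.mul_rpow (by norm_num) hb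
      _ ≤ 2 ^ k * (a ^ k + b ^ k) := by
          have : (0:ℝ) ≤ a ^ k := Real.rpow_nonneg ha k
          have h2 : (0:ℝ) < 2 ^ k := Real.rpow_pos_of_pos (by norm_num) k
          nlinarith
  · calc (a + b) ^ k ≤ (2 * a) ^ k := by
          exact Real.rpow_le_rpow (by linarith) (by linarith) hk
      _ = 2 ^ k * a ^ k := Real.mul_rpow (by norm_num) ha
      _ ≤ 2 ^ k * (a ^ k + b ^ k) := by
          have : (0:ℝ) ≤ b ^ k := Real.rpow_nonneg hb k
          have h2 : (0:ℝ) < 2 ^ k := Real.rpow_pos_of_pos (by norm_num) k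
          nlinarith

lemma Jbound (k p : ℝ) (hk : 0 ≤ k) (hp : 0 < p) :
    ∃ c C : ℝ, 0 < c ∧ c ≤ C ∧ ∀ ν : ℝ,
      IntegrableOn (fun σ : ℝ => σ ^ k * Real.exp (-p * |σ - ν|)) (Ioi 0) ∧
      c * (if 0 ≤ ν then Real.sqrt (1 + ν ^ 2) ^ k else Real.exp (p * ν)) ≤
        (∫ σ in Ioi (0:ℝ), σ ^ k * Real.exp (-p * |σ - ν|)) ∧
      (∫ σ in Ioi (0:ℝ), σ ^ k * Real.exp (-p * |σ - ν|)) ≤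
        C * (if 0 ≤ ν then Real.sqrt (1 + ν ^ 2) ^ k else Real.exp (p * ν)) := by
  have hKint : IntegrableOn (fun x : ℝ => x ^ k * Real.exp (-p * x)) (Ioi 0) :=
    int_rpow_exp hk hp
  set K : ℝ := ∫ x in Ioi (0:ℝ), x ^ k * Real.exp (-p * x) with hKdef
  have hKlow : Real.exp (-(2*p)) ≤ K := by
    refine low_seg hKint (fun σ hσ => mul_nonneg (Real.rpow_nonneg (le_of_lt hσ) k)
      (Real.exp_pos _).le) (le_refl (0:ℝ)) (fun σ hσ => ?_)
    have h1 : (1:ℝ) ≤ σ ^ k := Real.one_le_rpow (by simpa using hσ.1.le) hk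
    have h2 : Real.exp (-(2*p)) ≤ Real.exp (-p * σ) := by
      apply Real.exp_le_exp.2
      have := hσ.2
      nlinarith
    nlinarith [Real.exp_pos (-(2*p))]
  have hM1int : Integrable (fun t : ℝ => |t| ^ k * Real.exp (-p * |t|)) :=
    integrable_abs_rpow_exp hk hp
  have hM0int : Integrable (fun t : ℝ => Real.exp (-p * |t|)) := by
    have := integrable_abs_rpow_exp (le_refl (0:ℝ)) hp
    simpa using this
  set M0 : ℝ := ∫ t : ℝ, Real.exp (-p * |t|) with hM0def
  set M1 : ℝ := ∫ t : ℝ, |t| ^ k * Real.exp (-p * |t|) with hM1def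
  have hM0 : 0 ≤ M0 := integral_nonneg fun t => (Real.exp_pos _).le
  have hM1 : 0 ≤ M1 := integral_nonneg fun t =>
    mul_nonneg (Real.rpow_nonneg (abs_nonneg t) k) (Real.exp_pos _).le
  refine ⟨Real.exp (-(2*p)), max (2 ^ k * (M0 + M1)) K, Real.exp_pos _,
    le_trans hKlow (le_max_right _ _), fun ν => ?_⟩
  by_cases hν : 0 ≤ ν
  · simp only [if_pos hν]
    set S : ℝ := Real.sqrt (1 + ν ^ 2) with hSdef
    have hSsq : S ^ 2 = 1 + ν ^ 2 := Real.sq_sqrt (by positivity)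
    have hSnn : 0 ≤ S := Real.sqrt_nonneg _
    have hS1 : 1 ≤ S := by nlinarith
    have hSν : ν ≤ S := by nlinarith
    have hSle : S ≤ 1 + ν := by
      rw [hSdef]
      have : Real.sqrt (1 + ν^2) ≤ Real.sqrt ((1+ν)^2) := Real.sqrt_le_sqrt (by nlinarith)
      rwa [Real.sqrt_sq (by linarith)] at this
    have hS0 : 0 ≤ S := by linarith
    have hSk1 : (1:ℝ) ≤ S ^ k := Real.one_le_rpow hS1 hk
    have hSkν : ν ^ k ≤ S ^ k := Real.rpow_le_rpow hν hSν hk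
    set g : ℝ → ℝ := fun σ =>
      2 ^ k * ν ^ k * Real.exp (-p * |σ - ν|) + 2 ^ k * (|σ - ν| ^ k * Real.exp (-p * |σ - ν|))
      with hgdef
    have hgint : Integrable g := by
      have ha : Integrable (fun σ : ℝ => Real.exp (-p * |σ - ν|)) := by
        simpa using hM0int.comp_sub_right ν
      have hb : Integrable (fun σ : ℝ => |σ - ν| ^ k * Real.exp (-p * |σ - ν|)) := by
        simpa using hM1int.comp_sub_right ν
      exact (ha.const_mul _).add (hb.const_mul _)
    have hfg : ∀ σ ∈ Ioi (0:ℝ), σ ^ k * Real.exp (-p * |σ - ν|) ≤ g σ := by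
      intro σ hσ
      have hσ0 : (0:ℝ) ≤ σ := hσ.le
      have h1 : σ ≤ ν + |σ - ν| := by
        have := le_abs_self (σ - ν); linarith
      have h2 : σ ^ k ≤ 2 ^ k * (ν ^ k + |σ - ν| ^ k) :=
        le_trans (Real.rpow_le_rpow hσ0 h1 hk) (rpow_add_le hν (abs_nonneg _) hk)
      have he : (0:ℝ) < Real.exp (-p * |σ - ν|) := Real.exp_pos _
      calc σ ^ k * Real.exp (-p * |σ - ν|)
          ≤ (2 ^ k * (ν ^ k + |σ - ν| ^ k)) * Real.exp (-p * |σ - ν|) := by nlinarith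
        _ = g σ := by rw [hgdef]; ring
    have hg0 : ∀ σ : ℝ, 0 ≤ g σ := by
      intro σ
      have h2 : (0:ℝ) ≤ 2 ^ k := (Real.rpow_pos_of_pos (by norm_num) k).le
      have := Real.rpow_nonneg hν k
      have := Real.rpow_nonneg (abs_nonneg (σ - ν)) k
      have := (Real.exp_pos (-p * |σ - ν|)).le
      positivity
    have hmeas : AEStronglyMeasurable (fun σ : ℝ => σ ^ k * Real.exp (-p * |σ - ν|))
        (volume.restrict (Ioi 0)) := by
      apply Measurable.aestronglyMeasurable
      fun_prop
    have hfint : IntegrableOn (fun σ : ℝ => σ ^ k * Real.exp (-p * |σ - ν|)) (Ioi 0) := by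
      refine Integrable.mono' hgint.integrableOn hmeas ?_
      refine (ae_restrict_iff' measurableSet_Ioi).mpr (Filter.Eventually.of_forall fun σ hσ => ?_)
      rw [Real.norm_eq_abs, abs_of_nonneg (mul_nonneg (Real.rpow_nonneg hσ.le k) (Real.exp_pos _).le)]
      exact hfg σ hσ
    refine ⟨hfint, ?_, ?_⟩
    · -- lower bound
      refine low_seg hfint (fun σ hσ => mul_nonneg (Real.rpow_nonneg hσ.le k)
        (Real.exp_pos _).le) hν (fun σ hσ => ?_)
      have hσν : ν < σ := by have := hσ.1; linarith
      have habs : |σ - ν| = σ - ν := abs_of_pos (by linarith)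
      have h1 : S ^ k ≤ σ ^ k := by
        refine Real.rpow_le_rpow hS0 ?_ hk
        have := hσ.1; linarith
      have h2 : Real.exp (-(2*p)) ≤ Real.exp (-p * |σ - ν|) := by
        rw [habs]; apply Real.exp_le_exp.2
        have := hσ.2; nlinarith
      have hSk0 : (0:ℝ) ≤ S ^ k := Real.rpow_nonneg hS0 k
      nlinarith [Real.exp_pos (-(2*p)), Real.exp_pos (-p * |σ - ν|)]
    · -- upper bound
      have step1 : (∫ σ in Ioi (0:ℝ), σ ^ k * Real.exp (-p * |σ - ν|)) ≤ ∫ σ in Ioi (0:ℝ), g σ :=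
        setIntegral_mono_on hfint hgint.integrableOn measurableSet_Ioi hfg
      have step2 : (∫ σ in Ioi (0:ℝ), g σ) ≤ ∫ σ : ℝ, g σ :=
        setIntegral_le_integral hgint (Filter.Eventually.of_forall hg0)
      have step3 : (∫ σ : ℝ, g σ) = 2 ^ k * ν ^ k * M0 + 2 ^ k * M1 := by
        rw [hgdef]
        rw [integral_add ((hM0int.comp_sub_right ν).const_mul _)
          ((hM1int.comp_sub_right ν).const_mul _)]
        rw [integral_const_mul, integral_const_mul]
        congr 1
        · congr 1
          exact integral_sub_right_eq_self (fun t => Real.exp (-p * |t|)) ν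
        · congr 1
          exact integral_sub_right_eq_self (fun t => |t| ^ k * Real.exp (-p * |t|)) ν
      have h2k : (0:ℝ) < 2 ^ k := Real.rpow_pos_of_pos (by norm_num) k
      have final : 2 ^ k * ν ^ k * M0 + 2 ^ k * M1 ≤ (2 ^ k * (M0 + M1)) * S ^ k := by
        have t1 : 2 ^ k * ν ^ k * M0 ≤ 2 ^ k * S ^ k * M0 :=
          mul_le_mul_of_nonneg_right (mul_le_mul_of_nonneg_left hSkν h2k.le) hM0
        have t2 : 2 ^ k * M1 ≤ 2 ^ k * (S ^ k * M1) := by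
          have h := mul_le_mul_of_nonneg_right hSk1 hM1
          rw [one_mul] at h
          exact mul_le_mul_of_nonneg_left h h2k.le
        have hring : (2 ^ k * (M0 + M1)) * S ^ k = 2 ^ k * S ^ k * M0 + 2 ^ k * (S ^ k * M1) := by
          ring
        linarith
      have hle : (2 ^ k * (M0 + M1)) * S ^ k ≤ max (2 ^ k * (M0 + M1)) K * S ^ k :=
        mul_le_mul_of_nonneg_right (le_max_left _ _) (Real.rpow_nonneg hS0 k)
      linarith
  · simp only [if_neg hν]
    push_neg at hν
    have hcong : ∀ σ ∈ Ioi (0:ℝ),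
        σ ^ k * Real.exp (-p * |σ - ν|) = Real.exp (p * ν) * (σ ^ k * Real.exp (-p * σ)) := by
      intro σ hσ
      have habs : |σ - ν| = σ - ν := abs_of_pos (by simp only [mem_Ioi] at hσ; linarith)
      rw [habs, show -p * (σ - ν) = p * ν + -p * σ by ring, Real.exp_add]
      ring
    have hfint : IntegrableOn (fun σ : ℝ => σ ^ k * Real.exp (-p * |σ - ν|)) (Ioi 0) := by
      refine IntegrableOn.congr_fun (hKint.const_mul (Real.exp (p * ν))) (fun σ hσ => (hcong σ hσ).symm) measurableSet_Ioi
    have heq : (∫ σ in Ioi (0:ℝ), σ ^ k * Real.exp (-p * |σ - ν|)) = Real.exp (p * ν) * K := by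
      rw [setIntegral_congr_fun measurableSet_Ioi hcong, integral_const_mul]
    refine ⟨hfint, ?_, ?_⟩
    · rw [heq]
      have := Real.exp_pos (p * ν)
      nlinarith
    · rw [heq]
      have := Real.exp_pos (p * ν)
      nlinarith [le_max_right (2 ^ k * (M0 + M1)) K]

noncomputable def wFD (t : ℝ) : ℝ := Real.exp t / (1 + Real.exp t) ^ 2

lemma wFD_pos (t : ℝ) : 0 < wFD t := by
  have h := Real.exp_pos t
  unfold wFD; positivity

lemma wFD_le (t : ℝ) : wFD t ≤ Real.exp (-|t|) := by
  unfold wFD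
  have h := Real.exp_pos t
  have h1 : Real.exp (-t) * Real.exp t = 1 := by rw [← Real.exp_add]; norm_num
  have h2 : Real.exp (-t) * Real.exp t ^ 2 = Real.exp t := by
    rw [pow_two, ← mul_assoc, h1, one_mul]
  rw [div_le_iff₀ (by positivity)]
  rcases le_total 0 t with ht | ht
  · rw [abs_of_nonneg ht]
    nlinarith [Real.exp_pos (-t)]
  · rw [abs_of_nonpos ht, neg_neg]
    nlinarith

lemma wFD_ge (t : ℝ) : Real.exp (-|t|) / 4 ≤ wFD t := by
  unfold wFD
  have h := Real.exp_pos t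
  have h1 : Real.exp (-t) * Real.exp t = 1 := by rw [← Real.exp_add]; norm_num
  have h2 : Real.exp (-t) * Real.exp t ^ 2 = Real.exp t := by
    rw [pow_two, ← mul_assoc, h1, one_mul]
  rw [div_le_div_iff₀ (by norm_num) (by positivity)]
  rcases le_total 0 t with ht | ht
  · rw [abs_of_nonneg ht]
    have h3 : Real.exp (-t) ≤ 1 := Real.exp_le_one_iff.mpr (by linarith)
    have h4 : (1:ℝ) ≤ Real.exp t := Real.one_le_exp ht
    nlinarith
  · rw [abs_of_nonpos ht, neg_neg]
    have h3 : Real.exp t ≤ 1 := Real.exp_le_one_iff.mpr ht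
    nlinarith

lemma fFD_mul_one_sub (d : ℕ) (β μ : ℝ) (z : EuclideanSpace ℝ (Fin (2 * d))) :
    fFD d β μ z * (1 - fFD d β μ z) = wFD (β * (‖z‖ ^ 2 - μ)) := by
  unfold fFD wFD
  have h := Real.exp_pos (β * (‖z‖ ^ 2 - μ))
  have hne : (1 : ℝ) + Real.exp (β * (‖z‖ ^ 2 - μ)) ≠ 0 := by positivity
  field_simp
  ring

lemma hasGradientAt_fFD (d : ℕ) (β μ : ℝ) (z : EuclideanSpace ℝ (Fin (2 * d))) :
    HasGradientAt (fFD d β μ) ((-(2 * β * wFD (β * (‖z‖ ^ 2 - μ)))) • z) z := by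
  have h1 : HasDerivAt (fun u : ℝ => β * (u - μ)) β (‖z‖ ^ 2) := by
    simpa using ((hasDerivAt_id (‖z‖ ^ 2)).sub_const μ).const_mul β
  have h2 : HasDerivAt (fun u : ℝ => Real.exp (β * (u - μ)))
      (Real.exp (β * (‖z‖ ^ 2 - μ)) * β) (‖z‖ ^ 2) := h1.exp
  have h3 : HasDerivAt (fun u : ℝ => 1 + Real.exp (β * (u - μ)))
      (Real.exp (β * (‖z‖ ^ 2 - μ)) * β) (‖z‖ ^ 2) := h2.const_add 1
  have hne : (1 + Real.exp (β * (‖z‖ ^ 2 - μ))) ≠ 0 := by positivity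
  have h4 : HasDerivAt (fun u : ℝ => (1 + Real.exp (β * (u - μ)))⁻¹)
      (-(Real.exp (β * (‖z‖ ^ 2 - μ)) * β) / (1 + Real.exp (β * (‖z‖ ^ 2 - μ))) ^ 2)
      (‖z‖ ^ 2) := h3.inv hne
  have hN : HasFDerivAt (fun y : EuclideanSpace ℝ (Fin (2 * d)) => ‖y‖ ^ 2)
      ((fderivInnerCLM ℝ (z, z)).comp
        ((ContinuousLinearMap.id ℝ _).prod (ContinuousLinearMap.id ℝ _))) z := by
    have h := (hasFDerivAt_id (𝕜 := ℝ) z).inner ℝ (hasFDerivAt_id z)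
    exact h.congr_of_eventuallyEq
      (Filter.Eventually.of_forall fun y => (real_inner_self_eq_norm_sq y).symm)
  have hcomp := h4.comp_hasFDerivAt z hN
  rw [hasGradientAt_iff_hasFDerivAt]
  have hEq : (InnerProductSpace.toDual ℝ (EuclideanSpace ℝ (Fin (2 * d))))
        ((-(2 * β * wFD (β * (‖z‖ ^ 2 - μ)))) • z)
      = (-(Real.exp (β * (‖z‖ ^ 2 - μ)) * β) / (1 + Real.exp (β * (‖z‖ ^ 2 - μ))) ^ 2) •
        ((fderivInnerCLM ℝ (z, z)).comp
          ((ContinuousLinearMap.id ℝ _).prod (ContinuousLinearMap.id ℝ _))) := by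
    apply ContinuousLinearMap.ext
    intro y
    simp only [InnerProductSpace.toDual_apply_apply, ContinuousLinearMap.coe_smul',
      Pi.smul_apply, ContinuousLinearMap.coe_comp', Function.comp_apply,
      ContinuousLinearMap.prod_apply, ContinuousLinearMap.coe_id', id_eq,
      fderivInnerCLM_apply, smul_eq_mul]
    rw [real_inner_smul_left, real_inner_comm y z]
    unfold wFD
    have h := Real.exp_pos (β * (‖z‖ ^ 2 - μ))
    field_simp
    ring
  rw [hEq]
  exact hcomp

lemma norm_gradient_fFD (d : ℕ) {β : ℝ} (hβ : 0 < β) (μ : ℝ)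
    (z : EuclideanSpace ℝ (Fin (2 * d))) :
    ‖gradient (fFD d β μ) z‖ = 2 * β * wFD (β * (‖z‖ ^ 2 - μ)) * ‖z‖ := by
  rw [(hasGradientAt_fFD d β μ z).gradient, norm_smul, Real.norm_eq_abs, abs_neg,
    abs_of_nonneg (mul_nonneg (by linarith) (wFD_pos _).le)]

lemma subst_sq (F : ℝ → ℝ) : (∫ r in Ioi (0:ℝ), 2 * r * F (r ^ 2)) = ∫ s in Ioi (0:ℝ), F s := by
  have h := integral_comp_rpow_Ioi F (p := 2) (by norm_num)
  rw [← h]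
  refine setIntegral_congr_fun measurableSet_Ioi (fun r hr => ?_)
  have hr0 : (0:ℝ) < r := hr
  rw [smul_eq_mul]
  norm_num

lemma wFD_continuous : Continuous wFD := by
  unfold wFD
  exact Real.continuous_exp.div (by continuity) (fun t => by positivity)


lemma core (d : ℕ) (hd : 1 ≤ d) (p : ℝ) (hp : 1 ≤ p) (e : ℝ) (he : 0 ≤ e) :
    ∃ c C : ℝ, 0 < c ∧ c ≤ C ∧ ∀ β μ : ℝ, 0 < β →
      (c * (β ^ (-(1:ℝ) - ((d:ℝ) - 1 + e * p / 2)) *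
          (if 0 ≤ μ then Real.sqrt (1 + (β * μ) ^ 2) ^ ((d:ℝ) - 1 + e * p / 2)
           else Real.exp (p * (β * μ)))) ≤
        (∫ z : EuclideanSpace ℝ (Fin (2 * d)), (‖z‖ ^ e * wFD (β * (‖z‖ ^ 2 - μ))) ^ p)) ∧
      ((∫ z : EuclideanSpace ℝ (Fin (2 * d)), (‖z‖ ^ e * wFD (β * (‖z‖ ^ 2 - μ))) ^ p) ≤
        C * (β ^ (-(1:ℝ) - ((d:ℝ) - 1 + e * p / 2)) *
          (if 0 ≤ μ then Real.sqrt (1 + (β * μ) ^ 2) ^ ((d:ℝ) - 1 + e * p / 2)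
           else Real.exp (p * (β * μ))))) := by
  have hp0 : (0:ℝ) < p := by linarith
  set kk : ℝ := (d:ℝ) - 1 + e * p / 2 with hkk
  have hd1 : (1:ℝ) ≤ (d:ℝ) := by exact_mod_cast hd
  have hkk0 : 0 ≤ kk := by
    have : 0 ≤ e * p / 2 := by positivity
    rw [hkk]; linarith
  obtain ⟨c0, C0, hc0, hc0C0, hJ⟩ := Jbound kk p hkk0 hp0
  haveI hnt : Nontrivial (EuclideanSpace ℝ (Fin (2 * d))) := by
    apply Module.nontrivial_of_finrank_pos (R := ℝ)
    rw [finrank_euclideanSpace_fin]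
    omega
  set V : ℝ := (volume (Metric.ball (0 : EuclideanSpace ℝ (Fin (2 * d))) 1)).toReal with hV
  have hVpos : 0 < V := by
    rw [hV]
    apply ENNReal.toReal_pos
    · exact (Metric.measure_ball_pos volume 0 one_pos).ne'
    · exact measure_ball_lt_top.ne
  set P0 : ℝ := ((2 * d : ℕ) : ℝ) * V / 2 with hP0
  have hP0pos : 0 < P0 := by
    have h2d : (0:ℝ) < ((2 * d : ℕ) : ℝ) := by
      have : 0 < 2 * d := by omega
      exact_mod_cast this
    rw [hP0]; positivity
  have h4p : (0:ℝ) < (4:ℝ) ^ (-p) := Real.rpow_pos_of_pos (by norm_num) _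
  have h4p1 : (4:ℝ) ^ (-p) ≤ 1 :=
    Real.rpow_le_one_of_one_le_of_nonpos (by norm_num) (by linarith)
  refine ⟨P0 * (4:ℝ) ^ (-p) * c0, P0 * C0, by positivity, ?_, ?_⟩
  · have h1 : P0 * (4:ℝ) ^ (-p) * c0 ≤ P0 * 1 * c0 :=
      mul_le_mul_of_nonneg_right (mul_le_mul_of_nonneg_left h4p1 hP0pos.le) hc0.le
    have h2 : P0 * 1 * c0 ≤ P0 * C0 := by
      rw [mul_one]
      exact mul_le_mul_of_nonneg_left hc0C0 hP0pos.le
    linarith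
  intro β μ hβ
  set ν : ℝ := β * μ with hν
  obtain ⟨hint, hlowJ, hupJ⟩ := hJ ν
  set T : ℝ := if 0 ≤ ν then Real.sqrt (1 + ν ^ 2) ^ kk else Real.exp (p * ν) with hT
  have hTpos : 0 < T := by
    rw [hT]
    split
    · apply Real.rpow_pos_of_pos
      have : (0:ℝ) < 1 + ν ^ 2 := by positivity
      exact Real.sqrt_pos.mpr this
    · exact Real.exp_pos _
  have hifeq : (if 0 ≤ μ then Real.sqrt (1 + ν ^ 2) ^ kk else Real.exp (p * ν)) = T := by
    rw [hT]
    by_cases h : 0 ≤ μ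
    · rw [if_pos h, if_pos (by rw [hν]; exact mul_nonneg hβ.le h)]
    · rw [if_neg h, if_neg (by rw [hν]; push_neg at h ⊢; nlinarith)]
  -- the 1D integrals
  set J : ℝ := ∫ σ in Ioi (0:ℝ), σ ^ kk * Real.exp (-p * |σ - ν|) with hJdef
  set Iw : ℝ := ∫ σ in Ioi (0:ℝ), σ ^ kk * wFD (σ - ν) ^ p with hIwdef
  have hJnonneg : 0 ≤ J := setIntegral_nonneg measurableSet_Ioi fun σ hσ =>
    mul_nonneg (Real.rpow_nonneg (le_of_lt hσ) _) (Real.exp_pos _).le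
  have hWle : ∀ σ : ℝ, wFD (σ - ν) ^ p ≤ Real.exp (-p * |σ - ν|) := by
    intro σ
    have h := Real.rpow_le_rpow (wFD_pos (σ - ν)).le (wFD_le (σ - ν)) hp0.le
    calc wFD (σ - ν) ^ p ≤ Real.exp (-|σ - ν|) ^ p := h
      _ = Real.exp (-p * |σ - ν|) := by
          rw [← Real.exp_mul]; ring_nf
  have hWge : ∀ σ : ℝ, (4:ℝ) ^ (-p) * Real.exp (-p * |σ - ν|) ≤ wFD (σ - ν) ^ p := by
    intro σ
    have h := Real.rpow_le_rpow (by positivity) (wFD_ge (σ - ν)) hp0.le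
    calc (4:ℝ) ^ (-p) * Real.exp (-p * |σ - ν|)
        = (Real.exp (-|σ - ν|) / 4) ^ p := by
          rw [Real.div_rpow (Real.exp_pos _).le (by norm_num), ← Real.exp_mul,
            Real.rpow_neg (by norm_num : (0:ℝ) ≤ 4)]
          rw [div_eq_mul_inv]
          ring_nf
      _ ≤ wFD (σ - ν) ^ p := h
  have hmeasW : Measurable (fun σ : ℝ => σ ^ kk * wFD (σ - ν) ^ p) := by
    have hw : Measurable wFD := wFD_continuous.measurable
    fun_prop
  have hIwint : IntegrableOn (fun σ : ℝ => σ ^ kk * wFD (σ - ν) ^ p) (Ioi 0) := by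
    refine Integrable.mono' hint (hmeasW.aestronglyMeasurable) ?_
    refine (ae_restrict_iff' measurableSet_Ioi).mpr (Filter.Eventually.of_forall fun σ hσ => ?_)
    rw [Real.norm_eq_abs, abs_of_nonneg (mul_nonneg (Real.rpow_nonneg hσ.le _)
      (Real.rpow_nonneg (wFD_pos _).le _))]
    exact mul_le_mul_of_nonneg_left (hWle σ) (Real.rpow_nonneg hσ.le _)
  have hIwlow : (4:ℝ) ^ (-p) * J ≤ Iw := by
    rw [hJdef, ← integral_const_mul]
    refine setIntegral_mono_on (hint.const_mul _) hIwint measurableSet_Ioi fun σ hσ => ?_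
    have h := mul_le_mul_of_nonneg_left (hWge σ) (Real.rpow_nonneg hσ.le kk)
    calc (4:ℝ) ^ (-p) * (σ ^ kk * Real.exp (-p * |σ - ν|))
        = σ ^ kk * ((4:ℝ) ^ (-p) * Real.exp (-p * |σ - ν|)) := by ring
      _ ≤ σ ^ kk * wFD (σ - ν) ^ p := h
  have hIwup : Iw ≤ J := by
    refine setIntegral_mono_on hIwint hint measurableSet_Ioi fun σ hσ => ?_
    exact mul_le_mul_of_nonneg_left (hWle σ) (Real.rpow_nonneg hσ.le kk)
  -- reduction of the 2d-dimensional integral to Iw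
  have Etot : (∫ z : EuclideanSpace ℝ (Fin (2 * d)), (‖z‖ ^ e * wFD (β * (‖z‖ ^ 2 - μ))) ^ p)
      = ((2 * d : ℕ) : ℝ) * (V * ((1/2) * (β⁻¹ * ((β⁻¹) ^ kk * Iw)))) := by
    have hrad := integral_fun_norm_addHaar
      (volume : Measure (EuclideanSpace ℝ (Fin (2 * d))))
      (fun r : ℝ => (r ^ e * wFD (β * (r ^ 2 - μ))) ^ p)
    rw [finrank_euclideanSpace_fin] at hrad
    rw [hrad, nsmul_eq_mul, smul_eq_mul]
    change _ * (V * _) = _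
    congr 1
    congr 1
    set F : ℝ → ℝ := fun s => (1/2) * (s ^ kk * wFD (β * (s - μ)) ^ p) with hF
    have e2 : (∫ r in Ioi (0:ℝ), r ^ (2 * d - 1) • (r ^ e * wFD (β * (r ^ 2 - μ))) ^ p)
        = ∫ r in Ioi (0:ℝ), 2 * r * F (r ^ 2) := by
      refine setIntegral_congr_fun measurableSet_Ioi fun r hr => ?_
      have hr0 : (0:ℝ) < r := hr
      have hw := wFD_pos (β * (r ^ 2 - μ))
      rw [smul_eq_mul, hF]
      show r ^ (2 * d - 1) * (r ^ e * wFD (β * (r ^ 2 - μ))) ^ p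
        = 2 * r * ((1/2) * ((r ^ 2) ^ kk * wFD (β * (r ^ 2 - μ)) ^ p))
      have h1 : (r ^ e * wFD (β * (r ^ 2 - μ))) ^ p
          = r ^ (e * p) * wFD (β * (r ^ 2 - μ)) ^ p := by
        rw [Real.mul_rpow (Real.rpow_nonneg hr0.le e) hw.le, ← Real.rpow_mul hr0.le]
      have h2 : (r:ℝ) ^ (2 * d - 1) = r ^ (((2 * d - 1 : ℕ)) : ℝ) :=
        (Real.rpow_natCast r (2 * d - 1)).symm
      have h3 : ((r:ℝ) ^ 2) ^ kk = r ^ (2 * kk) := by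
        rw [← Real.rpow_natCast r 2, ← Real.rpow_mul hr0.le]
        norm_num
      have h6 : (((2 * d - 1 : ℕ)) : ℝ) + e * p = 1 + 2 * kk := by
        have hc : (((2 * d - 1 : ℕ)) : ℝ) = 2 * (d:ℝ) - 1 := by
          rw [Nat.cast_sub (by omega)]
          push_cast; ring
        rw [hc, hkk]; ring
      rw [h1, h2, h3]
      rw [show r ^ (((2 * d - 1 : ℕ)) : ℝ) * (r ^ (e * p) * wFD (β * (r ^ 2 - μ)) ^ p)
          = r ^ ((((2 * d - 1 : ℕ)) : ℝ) + e * p) * wFD (β * (r ^ 2 - μ)) ^ p from by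
        rw [Real.rpow_add hr0]; ring]
      rw [h6, Real.rpow_add hr0, Real.rpow_one]
      ring
    have e3 : (∫ s in Ioi (0:ℝ), F s)
        = (1/2) * ∫ s in Ioi (0:ℝ), s ^ kk * wFD (β * (s - μ)) ^ p := by
      rw [hF]
      exact integral_const_mul _ _
    have e4 : (∫ s in Ioi (0:ℝ), s ^ kk * wFD (β * (s - μ)) ^ p)
        = β⁻¹ * ((β⁻¹) ^ kk * Iw) := by
      have h := integral_comp_mul_left_Ioi
        (fun σ : ℝ => (β⁻¹ * σ) ^ kk * wFD (σ - β * μ) ^ p) 0 hβ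
      simp only [mul_zero] at h
      have hL : (∫ x in Ioi (0:ℝ), (β⁻¹ * (β * x)) ^ kk * wFD (β * x - β * μ) ^ p)
          = ∫ s in Ioi (0:ℝ), s ^ kk * wFD (β * (s - μ)) ^ p := by
        refine setIntegral_congr_fun measurableSet_Ioi fun x hx => ?_
        rw [inv_mul_cancel_left₀ hβ.ne', show β * x - β * μ = β * (x - μ) from by ring]
      have hR : (∫ σ in Ioi (0:ℝ), (β⁻¹ * σ) ^ kk * wFD (σ - β * μ) ^ p)
          = (β⁻¹) ^ kk * Iw := by
        rw [hIwdef, ← integral_const_mul]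
        refine setIntegral_congr_fun measurableSet_Ioi fun σ hσ => ?_
        rw [Real.mul_rpow (by positivity) hσ.le, hν]
        ring
      rw [← hL, h, smul_eq_mul, hR]
    calc (∫ r in Ioi (0:ℝ), r ^ (2 * d - 1) • (r ^ e * wFD (β * (r ^ 2 - μ))) ^ p)
        = ∫ r in Ioi (0:ℝ), 2 * r * F (r ^ 2) := e2
      _ = ∫ s in Ioi (0:ℝ), F s := subst_sq F
      _ = (1/2) * ∫ s in Ioi (0:ℝ), s ^ kk * wFD (β * (s - μ)) ^ p := e3
      _ = (1/2) * (β⁻¹ * ((β⁻¹) ^ kk * Iw)) := by rw [e4]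
  -- put everything together
  have hβinvkk : β⁻¹ * (β⁻¹) ^ kk = β ^ (-(1:ℝ) - kk) := by
    rw [Real.inv_rpow hβ.le, ← Real.rpow_neg hβ.le, ← Real.rpow_neg_one β,
      ← Real.rpow_add hβ]
    ring_nf
  have hbpos : (0:ℝ) < β ^ (-(1:ℝ) - kk) := Real.rpow_pos_of_pos hβ _
  rw [hifeq]
  constructor
  · rw [Etot]
    have step : (4:ℝ) ^ (-p) * (c0 * T) ≤ Iw := by
      have h1 : (4:ℝ) ^ (-p) * (c0 * T) ≤ (4:ℝ) ^ (-p) * J :=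
        mul_le_mul_of_nonneg_left hlowJ h4p.le
      linarith
    calc P0 * (4:ℝ) ^ (-p) * c0 * (β ^ (-(1:ℝ) - kk) * T)
        = (P0 * β ^ (-(1:ℝ) - kk)) * ((4:ℝ) ^ (-p) * (c0 * T)) := by ring
      _ ≤ (P0 * β ^ (-(1:ℝ) - kk)) * Iw :=
          mul_le_mul_of_nonneg_left step (by positivity)
      _ = ((2 * d : ℕ) : ℝ) * (V * ((1/2) * (β⁻¹ * ((β⁻¹) ^ kk * Iw)))) := by
          rw [hP0, ← hβinvkk]; ring
  · rw [Etot]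
    calc ((2 * d : ℕ) : ℝ) * (V * ((1/2) * (β⁻¹ * ((β⁻¹) ^ kk * Iw))))
        = (P0 * β ^ (-(1:ℝ) - kk)) * Iw := by rw [hP0, ← hβinvkk]; ring
      _ ≤ (P0 * β ^ (-(1:ℝ) - kk)) * (C0 * T) := by
          refine mul_le_mul_of_nonneg_left ?_ (by positivity)
          calc Iw ≤ J := hIwup
            _ ≤ C0 * T := hupJ
      _ = P0 * C0 * (β ^ (-(1:ℝ) - kk) * T) := by ring

lemma massage {p cc β S : ℝ} (hp0 : 0 < p) (hcc : 0 ≤ cc) (hβ : 0 < β) (hS : 0 ≤ S)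
    (g a b : ℝ) (hg : 0 ≤ g) :
    (g ^ p * (cc * (β ^ a * S ^ b))) ^ (1/p)
      = cc ^ (1/p) * g * (β ^ (a * (1/p)) * S ^ (b * (1/p))) := by
  rw [Real.mul_rpow (Real.rpow_nonneg hg p)
      (mul_nonneg hcc (mul_nonneg (Real.rpow_nonneg hβ.le a) (Real.rpow_nonneg hS b))),
    Real.mul_rpow hcc (mul_nonneg (Real.rpow_nonneg hβ.le a) (Real.rpow_nonneg hS b)),
    Real.mul_rpow (Real.rpow_nonneg hβ.le a) (Real.rpow_nonneg hS b),
    ← Real.rpow_mul hg, mul_one_div_cancel hp0.ne', Real.rpow_one,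
    ← Real.rpow_mul hβ.le, ← Real.rpow_mul hS]
  ring


end Aux

open Set Real in
theorem stmt_3 (d : ℕ) (hd : 1 ≤ d) (p : ℝ) (hp : 1 ≤ p) :
    ∃ c C : ℝ, 0 < c ∧ c ≤ C ∧
      ∀ (β μ : ℝ), 0 < β →
        (c * (β ^ ((1 : ℝ) / 2 - (d : ℝ) / p) *
              (if 0 ≤ μ then Real.sqrt (1 + (β * μ) ^ 2) ^ (((d : ℝ) - 1) / p + 1 / 2)
               else Real.exp (β * μ))) ≤
            (∫ z : EuclideanSpace ℝ (Fin (2 * d)), ‖gradient (fFD d β μ) z‖ ^ p) ^ (1 / p) ∧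
          (∫ z : EuclideanSpace ℝ (Fin (2 * d)), ‖gradient (fFD d β μ) z‖ ^ p) ^ (1 / p) ≤
            C * (β ^ ((1 : ℝ) / 2 - (d : ℝ) / p) *
              (if 0 ≤ μ then Real.sqrt (1 + (β * μ) ^ 2) ^ (((d : ℝ) - 1) / p + 1 / 2)
               else Real.exp (β * μ)))) ∧
        (c * (β ^ (-((d : ℝ) / p)) *
              (if 0 ≤ μ then Real.sqrt (1 + (β * μ) ^ 2) ^ (((d : ℝ) - 1) / p)
               else Real.exp (β * μ))) ≤
            (∫ z : EuclideanSpace ℝ (Fin (2 * d)),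
              |fFD d β μ z * (1 - fFD d β μ z)| ^ p) ^ (1 / p) ∧
          (∫ z : EuclideanSpace ℝ (Fin (2 * d)),
              |fFD d β μ z * (1 - fFD d β μ z)| ^ p) ^ (1 / p) ≤
            C * (β ^ (-((d : ℝ) / p)) *
              (if 0 ≤ μ then Real.sqrt (1 + (β * μ) ^ 2) ^ (((d : ℝ) - 1) / p)
               else Real.exp (β * μ)))) := by
  have hp0 : (0:ℝ) < p := by linarith
  have hp' : (0:ℝ) ≤ 1/p := by positivity
  obtain ⟨cA, CA, hcA, hcACA, hA⟩ := core d hd p hp 1 zero_le_one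
  obtain ⟨cB, CB, hcB, hcBCB, hB⟩ := core d hd p hp 0 le_rfl
  simp only [one_mul] at hA
  simp only [zero_mul, zero_div, add_zero] at hB
  refine ⟨min (cA ^ (1/p) * 2) (cB ^ (1/p)), max (CA ^ (1/p) * 2) (CB ^ (1/p)),
    lt_min (by positivity) (by positivity), ?_, ?_⟩
  · have h1 : cA ^ (1/p) * 2 ≤ CA ^ (1/p) * 2 := by
      have := Real.rpow_le_rpow hcA.le hcACA hp'
      linarith
    exact le_trans (min_le_left _ _) (le_trans h1 (le_max_left _ _))
  intro β μ hβ
  obtain ⟨hAl, hAu⟩ := hA β μ hβ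
  obtain ⟨hBl, hBu⟩ := hB β μ hβ
  set ν : ℝ := β * μ with hν
  set S : ℝ := Real.sqrt (1 + ν ^ 2) with hS
  have hS0 : 0 ≤ S := Real.sqrt_nonneg _
  have hppinv : p * (1/p) = 1 := mul_one_div_cancel hp0.ne'
  have h2p : p / 2 * (1/p) = 1/2 := by
    rw [div_mul_div_comm, mul_one, mul_comm 2 p, ← div_div, div_self hp0.ne']
  have ea : (-(1:ℝ) - ((d:ℝ) - 1 + p / 2)) * (1/p) + 1 = 1/2 - (d:ℝ)/p := by
    have h1 : (-(1:ℝ) - ((d:ℝ) - 1 + p / 2)) * (1/p)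
        = -((d:ℝ) * (1/p)) - p / 2 * (1/p) := by ring
    rw [h1, h2p, mul_one_div]
    ring
  have eb : ((d:ℝ) - 1 + p / 2) * (1/p) = ((d:ℝ) - 1)/p + 1/2 := by
    have h1 : ((d:ℝ) - 1 + p / 2) * (1/p) = ((d:ℝ) - 1) * (1/p) + p / 2 * (1/p) := by ring
    rw [h1, h2p, mul_one_div]
  have ec : (-(1:ℝ) - ((d:ℝ) - 1)) * (1/p) = -((d:ℝ)/p) := by
    rw [show (-(1:ℝ) - ((d:ℝ) - 1)) = -(d:ℝ) from by ring, mul_one_div, neg_div]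
  have ed : ((d:ℝ) - 1) * (1/p) = ((d:ℝ) - 1)/p := mul_one_div _ _
  have hexp : Real.exp (p * ν) = Real.exp ν ^ p := by
    rw [← Real.exp_mul, mul_comm]
  -- target factors
  set tA : ℝ := if 0 ≤ μ then S ^ (((d:ℝ) - 1)/p + 1/2) else Real.exp ν with htA
  set tB : ℝ := if 0 ≤ μ then S ^ (((d:ℝ) - 1)/p) else Real.exp ν with htB
  have htA0 : 0 ≤ tA := by
    rw [htA]; split
    · exact Real.rpow_nonneg hS0 _
    · exact (Real.exp_pos _).le
  have htB0 : 0 ≤ tB := by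
    rw [htB]; split
    · exact Real.rpow_nonneg hS0 _
    · exact (Real.exp_pos _).le
  have hifA0 : 0 ≤ (if 0 ≤ μ then S ^ ((d:ℝ) - 1 + p / 2) else Real.exp (p * ν)) := by
    split
    · exact Real.rpow_nonneg hS0 _
    · exact (Real.exp_pos _).le
  have hifB0 : 0 ≤ (if 0 ≤ μ then S ^ ((d:ℝ) - 1) else Real.exp (p * ν)) := by
    split
    · exact Real.rpow_nonneg hS0 _
    · exact (Real.exp_pos _).le
  -- key rpow computations
  have keyA : ∀ cc : ℝ, 0 ≤ cc →
      ((2*β) ^ p * (cc * (β ^ (-(1:ℝ) - ((d:ℝ) - 1 + p / 2)) *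
        (if 0 ≤ μ then S ^ ((d:ℝ) - 1 + p / 2) else Real.exp (p * ν))))) ^ (1/p)
      = cc ^ (1/p) * 2 * (β ^ ((1:ℝ)/2 - (d:ℝ)/p) * tA) := by
    intro cc hcc
    by_cases hμ0 : 0 ≤ μ
    · rw [if_pos hμ0, htA, if_pos hμ0]
      rw [massage hp0 hcc hβ hS0 (2*β) _ _ (by positivity), eb]
      rw [show cc ^ (1/p) * (2*β) * (β ^ ((-(1:ℝ) - ((d:ℝ) - 1 + p / 2)) * (1/p)) *
            S ^ (((d:ℝ) - 1)/p + 1/2))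
          = cc ^ (1/p) * 2 * ((β ^ ((-(1:ℝ) - ((d:ℝ) - 1 + p / 2)) * (1/p)) * β ^ (1:ℝ)) *
            S ^ (((d:ℝ) - 1)/p + 1/2)) from by rw [Real.rpow_one]; ring,
        ← Real.rpow_add hβ, ea]
    · rw [if_neg hμ0, htA, if_neg hμ0, hexp]
      rw [massage hp0 hcc hβ (Real.exp_pos ν).le (2*β) _ _ (by positivity), hppinv,
        Real.rpow_one]
      rw [show cc ^ (1/p) * (2*β) * (β ^ ((-(1:ℝ) - ((d:ℝ) - 1 + p / 2)) * (1/p)) * Real.exp ν)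
          = cc ^ (1/p) * 2 * ((β ^ ((-(1:ℝ) - ((d:ℝ) - 1 + p / 2)) * (1/p)) * β ^ (1:ℝ)) *
            Real.exp ν) from by rw [Real.rpow_one]; ring,
        ← Real.rpow_add hβ, ea]
  have keyB : ∀ cc : ℝ, 0 ≤ cc →
      ((cc * (β ^ (-(1:ℝ) - ((d:ℝ) - 1)) *
        (if 0 ≤ μ then S ^ ((d:ℝ) - 1) else Real.exp (p * ν))))) ^ (1/p)
      = cc ^ (1/p) * (β ^ (-((d:ℝ)/p)) * tB) := by
    intro cc hcc
    by_cases hμ0 : 0 ≤ μ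
    · rw [if_pos hμ0, htB, if_pos hμ0]
      rw [show cc * (β ^ (-(1:ℝ) - ((d:ℝ) - 1)) * S ^ ((d:ℝ) - 1))
          = (1:ℝ) ^ p * (cc * (β ^ (-(1:ℝ) - ((d:ℝ) - 1)) * S ^ ((d:ℝ) - 1))) from by
        rw [Real.one_rpow]; ring]
      rw [massage hp0 hcc hβ hS0 1 _ _ zero_le_one, ec, ed]
      ring
    · rw [if_neg hμ0, htB, if_neg hμ0, hexp]
      rw [show cc * (β ^ (-(1:ℝ) - ((d:ℝ) - 1)) * Real.exp ν ^ p)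
          = (1:ℝ) ^ p * (cc * (β ^ (-(1:ℝ) - ((d:ℝ) - 1)) * Real.exp ν ^ p)) from by
        rw [Real.one_rpow]; ring]
      rw [massage hp0 hcc hβ (Real.exp_pos ν).le 1 _ _ zero_le_one, ec, hppinv, Real.rpow_one]
      ring
  -- rewrite the two integrals
  have hIA : (∫ z : EuclideanSpace ℝ (Fin (2 * d)), ‖gradient (fFD d β μ) z‖ ^ p)
      = (2*β) ^ p * ∫ z : EuclideanSpace ℝ (Fin (2 * d)),
          (‖z‖ ^ (1:ℝ) * wFD (β * (‖z‖ ^ 2 - μ))) ^ p := by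
    rw [← integral_const_mul]
    refine integral_congr_ae (Filter.Eventually.of_forall fun z => ?_)
    show ‖gradient (fFD d β μ) z‖ ^ p
      = (2*β) ^ p * ((‖z‖ ^ (1:ℝ) * wFD (β * (‖z‖ ^ 2 - μ))) ^ p)
    have hw := wFD_pos (β * (‖z‖ ^ 2 - μ))
    rw [norm_gradient_fFD d hβ μ z,
      show 2 * β * wFD (β * (‖z‖ ^ 2 - μ)) * ‖z‖
        = (2*β) * (‖z‖ ^ (1:ℝ) * wFD (β * (‖z‖ ^ 2 - μ))) from by rw [Real.rpow_one]; ring,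
      Real.mul_rpow (by positivity) (by positivity)]
  have hIB : (∫ z : EuclideanSpace ℝ (Fin (2 * d)), |fFD d β μ z * (1 - fFD d β μ z)| ^ p)
      = ∫ z : EuclideanSpace ℝ (Fin (2 * d)), (‖z‖ ^ (0:ℝ) * wFD (β * (‖z‖ ^ 2 - μ))) ^ p := by
    refine integral_congr_ae (Filter.Eventually.of_forall fun z => ?_)
    show |fFD d β μ z * (1 - fFD d β μ z)| ^ p
      = (‖z‖ ^ (0:ℝ) * wFD (β * (‖z‖ ^ 2 - μ))) ^ p
    rw [fFD_mul_one_sub, abs_of_pos (wFD_pos _), Real.rpow_zero, one_mul]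
  have hIAnn : 0 ≤ ∫ z : EuclideanSpace ℝ (Fin (2 * d)),
      (‖z‖ ^ (1:ℝ) * wFD (β * (‖z‖ ^ 2 - μ))) ^ p :=
    integral_nonneg fun z => Real.rpow_nonneg
      (mul_nonneg (Real.rpow_nonneg (norm_nonneg z) _) (wFD_pos _).le) _
  constructor
  · constructor
    · calc min (cA ^ (1/p) * 2) (cB ^ (1/p)) * (β ^ ((1:ℝ)/2 - (d:ℝ)/p) * tA)
          ≤ (cA ^ (1/p) * 2) * (β ^ ((1:ℝ)/2 - (d:ℝ)/p) * tA) :=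
            mul_le_mul_of_nonneg_right (min_le_left _ _)
              (mul_nonneg (Real.rpow_nonneg hβ.le _) htA0)
        _ = ((2*β) ^ p * (cA * (β ^ (-(1:ℝ) - ((d:ℝ) - 1 + p / 2)) *
              (if 0 ≤ μ then S ^ ((d:ℝ) - 1 + p / 2) else Real.exp (p * ν))))) ^ (1/p) :=
            (keyA cA hcA.le).symm
        _ ≤ (∫ z : EuclideanSpace ℝ (Fin (2 * d)), ‖gradient (fFD d β μ) z‖ ^ p) ^ (1/p) := by
            rw [hIA]
            refine Real.rpow_le_rpow ?_ (mul_le_mul_of_nonneg_left hAl (by positivity)) hp'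
            exact mul_nonneg (by positivity) (mul_nonneg hcA.le
              (mul_nonneg (Real.rpow_nonneg hβ.le _) hifA0))
    · calc (∫ z : EuclideanSpace ℝ (Fin (2 * d)), ‖gradient (fFD d β μ) z‖ ^ p) ^ (1/p)
          ≤ ((2*β) ^ p * (CA * (β ^ (-(1:ℝ) - ((d:ℝ) - 1 + p / 2)) *
              (if 0 ≤ μ then S ^ ((d:ℝ) - 1 + p / 2) else Real.exp (p * ν))))) ^ (1/p) := by
            rw [hIA]
            exact Real.rpow_le_rpow (by positivity)
              (mul_le_mul_of_nonneg_left hAu (by positivity)) hp'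
        _ = (CA ^ (1/p) * 2) * (β ^ ((1:ℝ)/2 - (d:ℝ)/p) * tA) :=
            keyA CA (hcA.le.trans hcACA)
        _ ≤ max (CA ^ (1/p) * 2) (CB ^ (1/p)) * (β ^ ((1:ℝ)/2 - (d:ℝ)/p) * tA) :=
            mul_le_mul_of_nonneg_right (le_max_left _ _)
              (mul_nonneg (Real.rpow_nonneg hβ.le _) htA0)
  · have hIBnn : 0 ≤ ∫ z : EuclideanSpace ℝ (Fin (2 * d)),
        (‖z‖ ^ (0:ℝ) * wFD (β * (‖z‖ ^ 2 - μ))) ^ p :=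
      integral_nonneg fun z => Real.rpow_nonneg
        (mul_nonneg (Real.rpow_nonneg (norm_nonneg z) _) (wFD_pos _).le) _
    constructor
    · calc min (cA ^ (1/p) * 2) (cB ^ (1/p)) * (β ^ (-((d:ℝ)/p)) * tB)
          ≤ cB ^ (1/p) * (β ^ (-((d:ℝ)/p)) * tB) :=
            mul_le_mul_of_nonneg_right (min_le_right _ _)
              (mul_nonneg (Real.rpow_nonneg hβ.le _) htB0)
        _ = ((cB * (β ^ (-(1:ℝ) - ((d:ℝ) - 1)) *
              (if 0 ≤ μ then S ^ ((d:ℝ) - 1) else Real.exp (p * ν))))) ^ (1/p) :=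
            (keyB cB hcB.le).symm
        _ ≤ (∫ z : EuclideanSpace ℝ (Fin (2 * d)),
              |fFD d β μ z * (1 - fFD d β μ z)| ^ p) ^ (1/p) := by
            rw [hIB]
            refine Real.rpow_le_rpow ?_ hBl hp'
            exact mul_nonneg hcB.le (mul_nonneg (Real.rpow_nonneg hβ.le _) hifB0)
    · calc (∫ z : EuclideanSpace ℝ (Fin (2 * d)),
              |fFD d β μ z * (1 - fFD d β μ z)| ^ p) ^ (1/p)
          ≤ ((CB * (β ^ (-(1:ℝ) - ((d:ℝ) - 1)) *
              (if 0 ≤ μ then S ^ ((d:ℝ) - 1) else Real.exp (p * ν))))) ^ (1/p) := by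
            rw [hIB]
            exact Real.rpow_le_rpow hIBnn hBu hp'
        _ = CB ^ (1/p) * (β ^ (-((d:ℝ)/p)) * tB) :=
            keyB CB (hcB.le.trans hcBCB)
        _ ≤ max (CA ^ (1/p) * 2) (CB ^ (1/p)) * (β ^ (-((d:ℝ)/p)) * tB) :=
            mul_le_mul_of_nonneg_right (le_max_right _ _)
              (mul_nonneg (Real.rpow_nonneg hβ.le _) htB0)
end
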